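/- arXiv:2605.31441 — 5 statements merged into one kernel-verified Lean document; each statement's English description precedes it below -/
import Mathlib

section
/- Let (X,d) be a metric space, β > 0, 0 < v_* ≤ v^*, and let μ be a Borel measure on X satisfying v_*·r^β ≤ μ(B(x,r)) ≤ v^*·r^β for every x ∈ X and every real r with 0 < r ≤ diam X. Let δ > 0 and let S ⊆ X be a δ-net, meaning d(u,v) ≥ δ for all distinct u,v ∈ S and every point of X lies within distance δ of some point of S. Then for every u ∈ X and every real R with δ ≤ R and R + δ ≤ diam X, the set S ∩ B(u,R+δ) contains at least (v_*/v^*)·(R/δ)^β points; consequently, since any closed ball of radius δ/3 contains at most one point of S, at least (v_*/v^*)·(R/δ)^β balls of radius δ/3 are required to cover S ∩ B(u,R+δ). -/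
open Set Metric
open scoped ENNReal

/-- Net-counting in an Ahlfors `β`-regular metric space: a `δ`-net has at least
`(v_*/v^*)·(R/δ)^β` points in any ball of radius `R+δ` (for `δ ≤ R`, `R+δ ≤ diam X`),
and consequently covering the net points in that ball by balls of radius `δ/3`
requires at least that many balls. -/
theorem net_counting {X : Type*} [MetricSpace X] [MeasurableSpace X] [BorelSpace X]
    (μ : MeasureTheory.Measure X) (β vs vh : ℝ) (hβ : 0 < β)
    (hvs : 0 < vs) (hvv : vs ≤ vh)
    (hreg : ∀ (x : X) (r : ℝ), 0 < r → r ≤ Metric.diam (Set.univ : Set X) →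
      ENNReal.ofReal (vs * r ^ β) ≤ μ (Metric.closedBall x r) ∧
        μ (Metric.closedBall x r) ≤ ENNReal.ofReal (vh * r ^ β))
    (δ : ℝ) (hδ : 0 < δ) (S : Set X)
    (hsep : ∀ u ∈ S, ∀ v ∈ S, u ≠ v → δ ≤ dist u v)
    (hnet : ∀ x : X, ∃ s ∈ S, dist x s ≤ δ) :
    ∀ (u : X) (R : ℝ), δ ≤ R → R + δ ≤ Metric.diam (Set.univ : Set X) →
      (vs / vh) * (R / δ) ^ β ≤ ((S ∩ Metric.closedBall u (R + δ)).ncard : ℝ) ∧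
      (∀ F : Finset X,
        S ∩ Metric.closedBall u (R + δ) ⊆ ⋃ y ∈ F, Metric.closedBall y (δ / 3) →
        (vs / vh) * (R / δ) ^ β ≤ (F.card : ℝ)) := by
  intro u R hδR hRd
  have hvh : 0 < vh := lt_of_lt_of_le hvs hvv
  have hR : 0 < R := lt_of_lt_of_le hδ hδR
  have hdiam : 0 < Metric.diam (univ : Set X) := lt_of_lt_of_le (by linarith) hRd
  set T : Set X := S ∩ Metric.closedBall u (R + δ) with hT
  -- the space is bounded
  have hediam : Metric.ediam (univ : Set X) ≠ ⊤ := by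
    intro h
    rw [Metric.diam, h] at hdiam
    simp at hdiam
  have hbdd : Bornology.IsBounded (univ : Set X) :=
    Metric.isBounded_iff_ediam_ne_top.mpr hediam
  -- total measure is finite
  have hμtot : μ (univ : Set X) ≠ ⊤ := by
    have hsub : (univ : Set X) ⊆ Metric.closedBall u (Metric.diam (univ : Set X)) := by
      intro x _
      exact Metric.mem_closedBall.mpr (Metric.dist_le_diam_of_mem hbdd trivial trivial)
    have := (hreg u (Metric.diam (univ : Set X)) hdiam le_rfl).2
    exact ne_top_of_le_ne_top (by simp) ((MeasureTheory.measure_mono hsub).trans this)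
  -- separation of points of T
  have hTsep : ∀ x ∈ T, ∀ y ∈ T, x ≠ y → δ ≤ dist x y := fun x hx y hy hxy =>
    hsep x hx.1 y hy.1 hxy
  -- T is finite
  have hTfin : T.Finite := by
    have hdisj : Pairwise (Function.onFun Disjoint fun t : T => Metric.closedBall (t : X) (δ / 3)) := by
      intro s t hst
      apply Metric.closedBall_disjoint_closedBall
      have := hTsep s s.2 t t.2 (fun h => hst (Subtype.ext h))
      linarith
    have hε : (0 : ℝ≥0∞) < ENNReal.ofReal (vs * (δ / 3) ^ β) := by
      apply ENNReal.ofReal_pos.mpr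
      positivity
    have hfin := MeasureTheory.Measure.finite_const_le_meas_of_disjoint_iUnion μ hε
      (fun t : T => measurableSet_closedBall) hdisj
      (ne_top_of_le_ne_top hμtot (MeasureTheory.measure_mono (subset_univ _)))
    have huniv : {t : T | ENNReal.ofReal (vs * (δ / 3) ^ β)
        ≤ μ (Metric.closedBall (t : X) (δ / 3))} = univ := by
      ext t
      simp only [mem_setOf_eq, mem_univ, iff_true]
      exact (hreg t (δ / 3) (by linarith) (by linarith)).1
    rw [huniv] at hfin
    have : Finite T := finite_univ_iff.mp hfin
    exact T.toFinite
  -- key counting estimate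
  have hcover : Metric.closedBall u R ⊆ ⋃ s ∈ hTfin.toFinset, Metric.closedBall s δ := by
    intro x hx
    obtain ⟨s, hsS, hxs⟩ := hnet x
    have hsT : s ∈ T := by
      refine ⟨hsS, Metric.mem_closedBall.mpr ?_⟩
      calc dist s u ≤ dist s x + dist x u := dist_triangle s x u
        _ ≤ δ + R := add_le_add (by rwa [dist_comm]) (Metric.mem_closedBall.mp hx)
        _ = R + δ := by ring
    exact mem_iUnion₂.mpr ⟨s, hTfin.mem_toFinset.mpr hsT, Metric.mem_closedBall.mpr hxs⟩
  have hmeas : ENNReal.ofReal (vs * R ^ β)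
      ≤ (hTfin.toFinset.card : ℝ≥0∞) * ENNReal.ofReal (vh * δ ^ β) := by
    calc ENNReal.ofReal (vs * R ^ β) ≤ μ (Metric.closedBall u R) :=
          (hreg u R hR (by linarith)).1
      _ ≤ μ (⋃ s ∈ hTfin.toFinset, Metric.closedBall s δ) := MeasureTheory.measure_mono hcover
      _ ≤ ∑ s ∈ hTfin.toFinset, μ (Metric.closedBall s δ) :=
          MeasureTheory.measure_biUnion_finset_le _ _
      _ ≤ ∑ _s ∈ hTfin.toFinset, ENNReal.ofReal (vh * δ ^ β) :=
          Finset.sum_le_sum fun s _ => (hreg s δ hδ (by linarith)).2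
      _ = (hTfin.toFinset.card : ℝ≥0∞) * ENNReal.ofReal (vh * δ ^ β) := by
          rw [Finset.sum_const, nsmul_eq_mul]
  have hncard : T.ncard = hTfin.toFinset.card := Set.ncard_eq_toFinset_card T hTfin
  -- convert to a real inequality
  have hreal : vs * R ^ β ≤ (T.ncard : ℝ) * (vh * δ ^ β) := by
    have h1 : (hTfin.toFinset.card : ℝ≥0∞) * ENNReal.ofReal (vh * δ ^ β)
        = ENNReal.ofReal ((hTfin.toFinset.card : ℝ) * (vh * δ ^ β)) := by
      rw [← ENNReal.ofReal_natCast hTfin.toFinset.card,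
        ← ENNReal.ofReal_mul (Nat.cast_nonneg _)]
    rw [h1] at hmeas
    have := (ENNReal.ofReal_le_ofReal_iff (by positivity)).mp hmeas
    rw [hncard]
    exact this
  have hmain : (vs / vh) * (R / δ) ^ β ≤ (T.ncard : ℝ) := by
    rw [Real.div_rpow hR.le hδ.le, div_mul_div_comm]
    rw [div_le_iff₀ (by positivity)]
    linarith [hreal]
  refine ⟨hmain, fun F hF => ?_⟩
  classical
  -- each small ball contains at most one point of T
  have hle : T.ncard ≤ F.card := by
    have hchoice : ∀ t ∈ T, ∃ y ∈ F, t ∈ Metric.closedBall y (δ / 3) := by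
      intro t ht
      obtain ⟨y, hy⟩ := mem_iUnion₂.mp (hF ht)
      exact ⟨y, hy.1, hy.2⟩
    choose f hfF hfB using hchoice
    have hinj : Set.InjOn (fun t : X => if h : t ∈ T then f t h else t) T := by
      intro a ha b hb hab
      simp only [dif_pos ha, dif_pos hb] at hab
      by_contra hne
      have hsep' := hTsep a ha b hb hne
      have h1 := Metric.mem_closedBall.mp (hfB a ha)
      have h2 := Metric.mem_closedBall.mp (hfB b hb)
      have hd : dist a b ≤ δ / 3 + δ / 3 := by
        calc dist a b ≤ dist a (f a ha) + dist (f a ha) b := dist_triangle _ _ _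
          _ = dist a (f a ha) + dist b (f b hb) := by rw [hab, dist_comm (f b hb) b]
          _ ≤ δ / 3 + δ / 3 := add_le_add h1 h2
      linarith
    have hmaps : ∀ t ∈ T, (fun t : X => if h : t ∈ T then f t h else t) t ∈ (F : Set X) := by
      intro t ht
      simp only [dif_pos ht]
      exact hfF t ht
    calc T.ncard ≤ (F : Set X).ncard :=
          Set.ncard_le_ncard_of_injOn _ hmaps hinj (F.finite_toSet)
      _ = F.card := Set.ncard_coe_finset F
  calc (vs / vh) * (R / δ) ^ β ≤ (T.ncard : ℝ) := hmain
    _ ≤ (F.card : ℝ) := Nat.cast_le.mpr hle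
end

section
/- Let G = (V,E) be a finite connected graph whose Cheeger constant satisfies h(G) ≥ ε for some ε > 0. Then for every vertex x ∈ V and every natural number r such that |B(x,s)| ≤ |V|/2 holds for all integers 0 ≤ s < r, one has |B(x,r)| ≥ (1+ε)^r. Consequently, any family {G_λ}_{λ∈I} of finite connected graphs with |V(G_λ)| unbounded and h(G_λ) ≥ ε for all λ has infinite Assouad dimension. -/
open Set
open scoped ENNReal

/-- The uniform covering condition with exponent `β` and constant `C` for a family of
spaces `X i` with distance functions `d i`. -/
def AssouadBoundWith {ι : Type*} (X : ι → Type*) (d : ∀ i, X i → X i → ℝ)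
    (β C : ℝ) : Prop :=
  ∀ (i : ι) (x : X i) (r R : ℝ), 0 < r → r < R →
    ∃ F : Finset (X i), (F.card : ℝ) ≤ C * (R / r) ^ β ∧
      {y | d i x y ≤ R} ⊆ ⋃ z ∈ F, {y | d i z y ≤ r}

/-- `β ≥ 0` is an admissible Assouad exponent for the family. -/
def AssouadBound {ι : Type*} (X : ι → Type*) (d : ∀ i, X i → X i → ℝ) (β : ℝ) : Prop :=
  0 ≤ β ∧ ∃ C : ℝ, 0 < C ∧ AssouadBoundWith X d β C

/-- The Assouad dimension of a family of spaces, as an element of `ℝ≥0∞`. -/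
noncomputable def assouadDim {ι : Type*} (X : ι → Type*) (d : ∀ i, X i → X i → ℝ) : ℝ≥0∞ :=
  sInf {b : ℝ≥0∞ | ∃ β : ℝ, b = ENNReal.ofReal β ∧ AssouadBound X d β}

/-- The closed ball of (real) radius `R` about a vertex `q` of a graph `G`, for the
shortest-path metric. -/
def gball {V : Type*} (G : SimpleGraph V) (q : V) (R : ℝ) : Set V :=
  {p | ((G.dist q p : ℝ)) ≤ R}

/-- The vertex boundary of a set `S`: vertices outside `S` adjacent to some vertex
of `S`. -/
def vertexBoundary {V : Type*} (G : SimpleGraph V) (S : Set V) : Set V :=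
  {v | v ∉ S ∧ ∃ u ∈ S, G.Adj u v}

lemma gball_mono' {V : Type*} (G : SimpleGraph V) (x : V) {a b : ℝ} (h : a ≤ b) :
    gball G x a ⊆ gball G x b := fun _ hp => le_trans hp h

lemma gball_zero' {V : Type*} (G : SimpleGraph V) (hG : G.Connected) (x : V) :
    gball G x 0 = {x} := by
  ext p
  simp only [gball, Set.mem_setOf_eq, Set.mem_singleton_iff]
  constructor
  · intro h
    have h0 : G.dist x p = 0 := by exact_mod_cast le_antisymm (by exact_mod_cast h) (Nat.zero_le _)
    rcases SimpleGraph.dist_eq_zero_iff_eq_or_not_reachable.mp h0 with h | h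
    · exact h.symm
    · exact absurd (hG.preconnected x p) h
  · rintro rfl; simp [SimpleGraph.dist_self]

lemma ball_growth' {V : Type*} [Fintype V] {G : SimpleGraph V} (hconn : G.Connected)
    {ε : ℝ} (hε : 0 < ε)
    (hch : ∀ S : Set V, S.Nonempty → (S.ncard : ℝ) ≤ (Fintype.card V : ℝ)/2 →
      ε * S.ncard ≤ ((vertexBoundary G S).ncard : ℝ))
    (x : V) : ∀ r : ℕ,
    (∀ s : ℕ, s < r → ((gball G x (s:ℝ)).ncard : ℝ) ≤ (Fintype.card V : ℝ)/2) →
    (1+ε)^r ≤ ((gball G x (r:ℝ)).ncard : ℝ) := by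
  intro r
  induction r with
  | zero => intro _; simp [gball_zero' G hconn x]
  | succ n ih =>
    intro h
    have hball := ih (fun s hs => h s (hs.trans (Nat.lt_succ_self n)))
    have hhalf := h n (Nat.lt_succ_self n)
    set S := gball G x (n:ℝ) with hS
    have hSne : S.Nonempty := ⟨x, by simp [hS, gball, SimpleGraph.dist_self]⟩
    have hbd := hch S hSne hhalf
    have hsub : S ∪ vertexBoundary G S ⊆ gball G x ((n+1 : ℕ) : ℝ) := by
      rintro v (hv | ⟨hv, u, hu, huv⟩)
      · exact gball_mono' G x (by exact_mod_cast Nat.le_succ n) hv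
      · have htri : G.dist x v ≤ G.dist x u + G.dist u v := hconn.dist_triangle
        have h1 : G.dist u v = 1 := SimpleGraph.dist_eq_one_iff_adj.mpr huv
        have hxu : G.dist x u ≤ n := by
          have := hu
          simp only [hS, gball, Set.mem_setOf_eq] at this
          exact_mod_cast this
        have hfin : G.dist x v ≤ n + 1 := by omega
        simp only [gball, Set.mem_setOf_eq]
        exact_mod_cast hfin
    have hdisj : Disjoint S (vertexBoundary G S) := by
      rw [Set.disjoint_left]; rintro v hv ⟨hv', _⟩; exact hv' hv
    have hcard : (S.ncard : ℝ) + ((vertexBoundary G S).ncard : ℝ)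
        ≤ ((gball G x ((n+1:ℕ):ℝ)).ncard : ℝ) := by
      rw [← Nat.cast_add, ← Set.ncard_union_eq hdisj (Set.toFinite _) (Set.toFinite _)]
      exact_mod_cast Set.ncard_le_ncard hsub (Set.toFinite _)
    have hpow : (0:ℝ) ≤ (1+ε)^n := by positivity
    calc (1+ε)^(n+1) = (1+ε)^n * (1+ε) := pow_succ _ _
      _ ≤ (S.ncard : ℝ) * (1+ε) := mul_le_mul_of_nonneg_right hball (by linarith)
      _ = (S.ncard : ℝ) + ε * S.ncard := by ring
      _ ≤ (S.ncard : ℝ) + ((vertexBoundary G S).ncard : ℝ) := by linarith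
      _ ≤ _ := hcard

/-- For a family of finite connected graphs with Cheeger constant at least `ε > 0`:
balls grow exponentially, `|B(x,r)| ≥ (1+ε)^r` as long as all smaller balls occupy at
most half of the vertices; consequently, if the vertex counts are unbounded, the
family has infinite Assouad dimension. -/
theorem expander_family_infinite_assouadDim {ι : Type*} (V : ι → Type*)
    [∀ i, Fintype (V i)] (G : ∀ i, SimpleGraph (V i)) (hconn : ∀ i, (G i).Connected)
    (ε : ℝ) (hε : 0 < ε)
    (hcheeger : ∀ (i : ι) (S : Set (V i)), S.Nonempty →
      (S.ncard : ℝ) ≤ (Fintype.card (V i) : ℝ) / 2 →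
      ε * (S.ncard : ℝ) ≤ ((vertexBoundary (G i) S).ncard : ℝ))
    (hunbounded : ∀ n : ℕ, ∃ i, n ≤ Fintype.card (V i)) :
    (∀ (i : ι) (x : V i) (r : ℕ),
      (∀ s : ℕ, s < r →
        ((gball (G i) x (s : ℝ)).ncard : ℝ) ≤ (Fintype.card (V i) : ℝ) / 2) →
      (1 + ε) ^ r ≤ ((gball (G i) x (r : ℝ)).ncard : ℝ)) ∧
    assouadDim V (fun i u v => ((G i).dist u v : ℝ)) = ⊤ := by
  have growth : ∀ (i : ι) (x : V i) (r : ℕ),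
      (∀ s : ℕ, s < r →
        ((gball (G i) x (s : ℝ)).ncard : ℝ) ≤ (Fintype.card (V i) : ℝ) / 2) →
      (1 + ε) ^ r ≤ ((gball (G i) x (r : ℝ)).ncard : ℝ) :=
    fun i x r h => ball_growth' (hconn i) hε (hcheeger i) x r h
  refine ⟨growth, ?_⟩
  have hempty : {b : ℝ≥0∞ | ∃ β : ℝ, b = ENNReal.ofReal β ∧
      AssouadBound V (fun i u v => ((G i).dist u v : ℝ)) β} = ∅ := by
    rw [Set.eq_empty_iff_forall_notMem]
    rintro b ⟨β, rfl, hβ0, C, hC, hA⟩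
    set k := ⌈β⌉₊ with hk
    have honelt : (1:ℝ) < 1 + ε := by linarith
    have ho := isLittleO_pow_const_const_pow_of_one_lt (R := ℝ) k honelt
    have hcpos : (0:ℝ) < 1/(2*C*2^k) := by positivity
    have hev := (ho.bound hcpos).and (Filter.eventually_ge_atTop 1)
    obtain ⟨R, hRb, hR1⟩ := hev.exists
    have hRk : (R:ℝ)^k ≤ (1/(2*C*2^k)) * (1+ε)^R := by
      rwa [Real.norm_of_nonneg (by positivity), Real.norm_of_nonneg (by positivity)] at hRb
    have hR1' : (1:ℝ) ≤ (R:ℝ) := by exact_mod_cast hR1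
    have hkey : C * (2*(R:ℝ))^k ≤ (1/2) * (1+ε)^R := by
      calc C * (2*(R:ℝ))^k = (C*2^k) * (R:ℝ)^k := by ring
        _ ≤ (C*2^k) * ((1/(2*C*2^k)) * (1+ε)^R) :=
            mul_le_mul_of_nonneg_left hRk (by positivity)
        _ = (1/2) * (1+ε)^R := by field_simp
    obtain ⟨n, hn⟩ := exists_nat_gt (2*C*(2*(R:ℝ))^k)
    obtain ⟨i, hi⟩ := hunbounded n
    have hnpos : 0 < n := by
      by_contra hn0
      push_neg at hn0
      interval_cases n
      simp only [Nat.cast_zero] at hn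
      nlinarith [pow_nonneg (by nlinarith : (0:ℝ) ≤ 2*(R:ℝ)) k]
    have : Nonempty (V i) := Fintype.card_pos_iff.mp (lt_of_lt_of_le hnpos hi)
    obtain ⟨x⟩ := this
    obtain ⟨F, hFc, hFcov⟩ := hA i x (1/2) (R:ℝ) (by norm_num) (by linarith)
    -- each 1/2-ball is a singleton
    have hsing : ∀ z : V i, {y | ((G i).dist z y : ℝ) ≤ 1/2} = {z} := by
      intro z
      ext y
      simp only [Set.mem_setOf_eq, Set.mem_singleton_iff]
      constructor
      · intro hy
        have h1 : ((G i).dist z y : ℝ) < 1 := lt_of_le_of_lt hy (by norm_num)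
        have h2 : (G i).dist z y < 1 := by exact_mod_cast h1
        have h0 : (G i).dist z y = 0 := by omega
        rcases SimpleGraph.dist_eq_zero_iff_eq_or_not_reachable.mp h0 with h | h
        · exact h.symm
        · exact absurd ((hconn i).preconnected z y) h
      · rintro rfl
        simp [SimpleGraph.dist_self]
    have hcov2 : gball (G i) x (R:ℝ) ⊆ (F : Set (V i)) := by
      intro y hy
      have hmem := hFcov hy
      simp only [Set.mem_iUnion] at hmem
      obtain ⟨z, hz, hyz⟩ := hmem
      rw [hsing z] at hyz
      rw [Set.mem_singleton_iff] at hyz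
      subst hyz
      exact hz
    have hle : ((gball (G i) x (R:ℝ)).ncard : ℝ) ≤ (F.card : ℝ) := by
      rw [← Set.ncard_coe_finset]
      exact_mod_cast Set.ncard_le_ncard hcov2 (Set.toFinite _)
    -- F.card ≤ C * (2R)^k
    have hdiv : ((R:ℝ)/(1/2)) = 2*(R:ℝ) := by ring
    rw [hdiv] at hFc
    have h2R : (1:ℝ) ≤ 2*(R:ℝ) := by linarith
    have hrpow : (2*(R:ℝ))^β ≤ (2*(R:ℝ))^(k:ℝ) :=
      Real.rpow_le_rpow_of_exponent_le h2R (Nat.le_ceil β)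
    rw [Real.rpow_natCast] at hrpow
    have hF2 : (F.card : ℝ) ≤ C * (2*(R:ℝ))^k :=
      hFc.trans (mul_le_mul_of_nonneg_left hrpow hC.le)
    have hchain : ((gball (G i) x (R:ℝ)).ncard : ℝ) ≤ (1/2) * (1+ε)^R :=
      hle.trans (hF2.trans hkey)
    by_cases hc : ∀ s : ℕ, s < R →
        ((gball (G i) x (s:ℝ)).ncard : ℝ) ≤ (Fintype.card (V i) : ℝ)/2
    · have hgr := growth i x R hc
      have hpos : (0:ℝ) < (1+ε)^R := by positivity
      linarith
    · push_neg at hc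
      obtain ⟨s, hsR, hs⟩ := hc
      have hmono : ((gball (G i) x (s:ℝ)).ncard : ℝ) ≤ ((gball (G i) x (R:ℝ)).ncard : ℝ) := by
        exact_mod_cast Set.ncard_le_ncard
          (gball_mono' (G i) x (by exact_mod_cast hsR.le)) (Set.toFinite _)
      have hin : (n:ℝ) ≤ (Fintype.card (V i) : ℝ) := by exact_mod_cast hi
      linarith
  rw [assouadDim, hempty, sInf_empty]
end

section
/- Let L ≥ 2 and β ≥ 1 be integers, and let R be a natural number with R < L. Then the map sending a tuple (R₀,…,R_{β−1}) of natural numbers with R₀ + ⋯ + R_{β−1} ≤ R to the residue Σ_{i=0}^{β−1} R_i·L^i in ℤ/L^βℤ is injective; consequently, the number of residues of ℤ/L^βℤ of the form Σ_{i=0}^{β−1} R_i·L^i with R_i ∈ ℕ and Σ R_i ≤ R equals the binomial coefficient C(R+β, β). -/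
open Set

/-- Tuples with sum ≤ R correspond to tuples of length one more with sum = R. -/
def sumLeEquivSumEq (β R : ℕ) :
    {f : Fin β → ℕ // (∑ i, f i) ≤ R} ≃ {g : Fin (β + 1) → ℕ // (∑ i, g i) = R} where
  toFun f := ⟨Fin.cons (R - ∑ i, f.1 i) f.1, by
    rw [Fin.sum_cons]; exact Nat.sub_add_cancel f.2⟩
  invFun g := ⟨fun i => g.1 i.succ, by
    have h := g.2
    rw [Fin.sum_univ_succ] at h
    show (∑ i : Fin β, g.1 i.succ) ≤ R
    omega⟩
  left_inv f := by ext i; simp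
  right_inv g := by
    ext i
    refine Fin.cases ?_ (fun j => ?_) i
    · have := g.2
      rw [Fin.sum_univ_succ] at this
      simp only [Fin.cons_zero]
      omega
    · simp
  
/-- Let `L ≥ 2`, `β ≥ 1`, `R < L`. The map sending a tuple `(R₀,…,R_{β-1})` of naturals
with `ΣRᵢ ≤ R` to the residue `Σ Rᵢ·Lⁱ` in `ℤ/L^βℤ` is injective, and the number of
such residues equals the binomial coefficient `C(R+β, β)`. -/
theorem base_L_ball_count (L β : ℕ) (hL : 2 ≤ L) (hβ : 1 ≤ β) (R : ℕ) (hR : R < L) :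
    Function.Injective
      (fun f : {f : Fin β → ℕ // (∑ i, f i) ≤ R} =>
        ∑ i : Fin β, (f.1 i : ZMod (L ^ β)) * (L : ZMod (L ^ β)) ^ (i : ℕ)) ∧
    ({z : ZMod (L ^ β) | ∃ f : Fin β → ℕ, (∑ i, f i) ≤ R ∧
        z = ∑ i : Fin β, (f i : ZMod (L ^ β)) * (L : ZMod (L ^ β)) ^ (i : ℕ)}).ncard
      = (R + β).choose β := by
  haveI : NeZero (L ^ β) := ⟨by positivity⟩
  set F := (fun f : {f : Fin β → ℕ // (∑ i, f i) ≤ R} =>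
        ∑ i : Fin β, (f.1 i : ZMod (L ^ β)) * (L : ZMod (L ^ β)) ^ (i : ℕ)) with hF
  -- each entry is < L
  have hlt : ∀ (f : {f : Fin β → ℕ // (∑ i, f i) ≤ R}) (i : Fin β), f.1 i < L := by
    intro f i
    calc f.1 i ≤ ∑ j, f.1 j := Finset.single_le_sum (fun j _ => Nat.zero_le _) (Finset.mem_univ i)
    _ ≤ R := f.2
    _ < L := hR
  have hinj : Function.Injective F := by
    intro f g hfg
    -- lift to Fin L valued functions
    set Ff : Fin β → Fin L := fun i => ⟨f.1 i, hlt f i⟩ with hFf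
    set Gg : Fin β → Fin L := fun i => ⟨g.1 i, hlt g i⟩ with hGg
    have hNf : ∑ i : Fin β, f.1 i * L ^ (i : ℕ) = (finFunctionFinEquiv Ff : ℕ) := by
      rw [finFunctionFinEquiv_apply]
    have hNg : ∑ i : Fin β, g.1 i * L ^ (i : ℕ) = (finFunctionFinEquiv Gg : ℕ) := by
      rw [finFunctionFinEquiv_apply]
    have hcast : ((∑ i : Fin β, f.1 i * L ^ (i : ℕ) : ℕ) : ZMod (L ^ β))
        = ((∑ i : Fin β, g.1 i * L ^ (i : ℕ) : ℕ) : ZMod (L ^ β)) := by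
      push_cast
      exact hfg
    rw [hNf, hNg] at hcast
    have hval : (finFunctionFinEquiv Ff : ℕ) = (finFunctionFinEquiv Gg : ℕ) := by
      have h1 := ZMod.val_cast_of_lt (finFunctionFinEquiv Ff).isLt
      have h2 := ZMod.val_cast_of_lt (finFunctionFinEquiv Gg).isLt
      rw [← h1, ← h2, hcast]
    have : Ff = Gg := finFunctionFinEquiv.injective (Fin.ext hval)
    ext i
    have := congrFun this i
    simpa [hFf, hGg, Fin.ext_iff] using this
  refine ⟨hinj, ?_⟩
  have hset : {z : ZMod (L ^ β) | ∃ f : Fin β → ℕ, (∑ i, f i) ≤ R ∧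
        z = ∑ i : Fin β, (f i : ZMod (L ^ β)) * (L : ZMod (L ^ β)) ^ (i : ℕ)} = Set.range F := by
    ext z
    constructor
    · rintro ⟨f, hf, rfl⟩
      exact ⟨⟨f, hf⟩, rfl⟩
    · rintro ⟨⟨f, hf⟩, rfl⟩
      exact ⟨f, hf, rfl⟩
  rw [hset, ← Nat.card_coe_set_eq, Nat.card_range_of_injective hinj]
  have e : {f : Fin β → ℕ // (∑ i, f i) ≤ R} ≃ Sym (Fin (β + 1)) R :=
    (sumLeEquivSumEq β R).trans (Sym.equivNatSumOfFintype (Fin (β + 1)) R).symm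
  rw [Nat.card_congr e, Nat.card_eq_fintype_card, Sym.card_sym_eq_choose]
  simp only [Fintype.card_fin]
  have h1 : β + 1 + R - 1 = R + β := by omega
  rw [h1, ← Nat.choose_symm (Nat.le_add_right R β)]
  congr 1
  omega
end

section
/- Let {B_λ}_{λ∈I} be a family of finite connected bipartite graphs with parts C_λ (check vertices) and Q_λ (qubit vertices), such that every check vertex has at least one neighbor, and suppose there is a constant μ ≥ 1, independent of λ, such that for every λ and every subset S ⊆ Q_λ at most μ check vertices of B_λ have neighborhood exactly equal to S. For each λ let G_λ be the graph on the vertex set Q_λ in which two distinct qubit vertices are adjacent if and only if they have a common neighbor in C_λ. Equip all graphs with their shortest-path metrics. Then dim_A({B_λ}_{λ∈I}) = dim_A({G_λ}_{λ∈I}), where both sides may equal +∞. -/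
open Set
open scoped ENNReal

/-- The relation underlying the Tanner (bipartite) graph of an incidence relation
`A : C → Q → Prop` between check vertices and qubit vertices. -/
def tannerRel {C Q : Type*} (A : C → Q → Prop) : C ⊕ Q → C ⊕ Q → Prop
  | Sum.inl c, Sum.inr q => A c q
  | _, _ => False

/-- The Tanner graph: the bipartite graph on `C ⊕ Q` with an edge between a check `c`
and a qubit `q` exactly when `A c q`. -/
def tannerGraph {C Q : Type*} (A : C → Q → Prop) : SimpleGraph (C ⊕ Q) :=
  SimpleGraph.fromRel (tannerRel A)

/-- The connectivity graph: two distinct qubits are adjacent iff they share a common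
check. -/
def connectivityGraph {C Q : Type*} (A : C → Q → Prop) : SimpleGraph Q :=
  SimpleGraph.fromRel fun q q' => ∃ c, A c q ∧ A c q'

section aux
variable {C Q : Type*} {A : C → Q → Prop}

lemma tanner_adj_iff {u v : C ⊕ Q} :
    (tannerGraph A).Adj u v ↔ (∃ c q, A c q ∧ ((u = Sum.inl c ∧ v = Sum.inr q) ∨ (u = Sum.inr q ∧ v = Sum.inl c))) := by
  constructor
  · rintro ⟨hne, h | h⟩ <;> rcases u with c | q <;> rcases v with c' | q' <;>
      simp [tannerRel] at h ⊢ <;> tauto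
  · rintro ⟨c, q, hA, ⟨rfl, rfl⟩ | ⟨rfl, rfl⟩⟩ <;>
      exact ⟨by simp, by simp [tannerRel, hA]⟩

lemma tanner_adj_inl_inr {c : C} {q : Q} (h : A c q) :
    (tannerGraph A).Adj (Sum.inl c) (Sum.inr q) :=
  tanner_adj_iff.2 ⟨c, q, h, Or.inl ⟨rfl, rfl⟩⟩

lemma conn_adj_iff {q q' : Q} :
    (connectivityGraph A).Adj q q' ↔ q ≠ q' ∧ ∃ c, A c q ∧ A c q' := by
  constructor
  · rintro ⟨hne, ⟨c, h1, h2⟩ | ⟨c, h1, h2⟩⟩ <;> exact ⟨hne, c, by tauto⟩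
  · rintro ⟨hne, c, h1, h2⟩; exact ⟨hne, Or.inl ⟨c, h1, h2⟩⟩

/-- From a connectivity-graph walk produce a Tanner walk of twice the length. -/
lemma exists_tanner_walk {q q' : Q} (w : (connectivityGraph A).Walk q q') :
    ∃ p : (tannerGraph A).Walk (Sum.inr q) (Sum.inr q'), p.length = 2 * w.length := by
  induction w with
  | nil => exact ⟨.nil, rfl⟩
  | cons h w ih =>
    obtain ⟨p, hp⟩ := ih
    obtain ⟨hne, c, h1, h2⟩ := conn_adj_iff.1 h
    refine ⟨.cons ((tanner_adj_inl_inr h1).symm) (.cons (tanner_adj_inl_inr h2) p), ?_⟩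
    simp [hp]; ring

/-- From a Tanner walk between qubits produce a connectivity walk of at most half length. -/
lemma exists_conn_walk : ∀ (n : ℕ) (q q' : Q) (p : (tannerGraph A).Walk (Sum.inr q) (Sum.inr q')),
    p.length = n → ∃ w : (connectivityGraph A).Walk q q', 2 * w.length ≤ n := by
  intro n
  induction n using Nat.strong_induction_on with
  | _ n ih =>
    intro q q' p hn
    cases p with
    | nil => exact ⟨.nil, by simp⟩
    | cons h p =>
      rename_i v
      rcases v with c | q2
      · cases p with
        | cons h2 p2 =>
          rename_i v2
          rcases v2 with c2 | q2
          · exfalso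
            rcases tanner_adj_iff.1 h2 with ⟨c', q'', hA, ⟨he1, he2⟩ | ⟨he1, he2⟩⟩ <;> simp_all
          · -- h : Adj (inr q) (inl c), h2 : Adj (inl c) (inr q2)
            have hA1 : A c q := by
              rcases tanner_adj_iff.1 h with ⟨c', q'', hA, ⟨he1, he2⟩ | ⟨he1, he2⟩⟩ <;> simp_all
            have hA2 : A c q2 := by
              rcases tanner_adj_iff.1 h2 with ⟨c', q'', hA, ⟨he1, he2⟩ | ⟨he1, he2⟩⟩ <;> simp_all
            have hlen : p2.length < n := by simp [← hn, SimpleGraph.Walk.length_cons]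
            obtain ⟨w, hw⟩ := ih p2.length hlen q2 q' p2 rfl
            by_cases hq : q = q2
            · subst hq
              exact ⟨w, by simp [← hn]; omega⟩
            · refine ⟨.cons (conn_adj_iff.2 ⟨hq, c, hA1, hA2⟩) w, ?_⟩
              simp [← hn, SimpleGraph.Walk.length_cons]; omega
      · exfalso
        rcases tanner_adj_iff.1 h with ⟨c', q'', hA, ⟨he1, he2⟩ | ⟨he1, he2⟩⟩ <;> simp_all

end aux

section dist
variable {C Q : Type*} {A : C → Q → Prop}
  (hconn : (tannerGraph A).Connected) (hcheck : ∀ c, ∃ q, A c q)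

include hconn hcheck in
lemma Q_nonempty : Nonempty Q := by
  obtain ⟨u⟩ := hconn.nonempty
  rcases u with c | q
  · obtain ⟨q, _⟩ := hcheck c; exact ⟨q⟩
  · exact ⟨q⟩

include hconn in
lemma conn_reachable (q q' : Q) : (connectivityGraph A).Reachable q q' := by
  obtain ⟨p⟩ := hconn (Sum.inr q) (Sum.inr q')
  obtain ⟨w, -⟩ := exists_conn_walk p.length q q' p rfl
  exact ⟨w⟩

include hconn hcheck in
lemma conn_connected : (connectivityGraph A).Connected := by
  have := Q_nonempty hconn hcheck
  exact ⟨conn_reachable hconn⟩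

include hconn in
lemma tanner_dist_eq (q q' : Q) :
    (tannerGraph A).dist (Sum.inr q) (Sum.inr q') = 2 * (connectivityGraph A).dist q q' := by
  apply le_antisymm
  · obtain ⟨w, hw⟩ := (conn_reachable hconn q q').exists_walk_length_eq_dist
    obtain ⟨p, hp⟩ := exists_tanner_walk w
    calc (tannerGraph A).dist (Sum.inr q) (Sum.inr q') ≤ p.length := SimpleGraph.dist_le p
    _ = 2 * (connectivityGraph A).dist q q' := by rw [hp, hw]
  · obtain ⟨p, hp⟩ := (hconn (Sum.inr q) (Sum.inr q')).exists_walk_length_eq_dist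
    obtain ⟨w, hw⟩ := exists_conn_walk p.length q q' p rfl
    calc 2 * (connectivityGraph A).dist q q' ≤ 2 * w.length :=
          Nat.mul_le_mul_left 2 (SimpleGraph.dist_le w)
    _ ≤ p.length := hw
    _ = _ := hp

lemma tanner_dist_check {c : C} {q : Q} (h : A c q) :
    (tannerGraph A).dist (Sum.inl c) (Sum.inr q) ≤ 1 := by
  have := SimpleGraph.dist_le (SimpleGraph.Walk.cons (tanner_adj_inl_inr h) .nil)
  simpa using this

end dist

section cover
open Classical in
lemma ncard_le_of_cover_singletons {V : Type*} {s : Set V} {F : Finset V} {f : V → Set V}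
    (hf : ∀ z, f z ⊆ {z}) (h : s ⊆ ⋃ z ∈ F, f z) : s.ncard ≤ F.card := by
  have hsub : s ⊆ ↑F := by
    intro y hy
    obtain ⟨z, hz, hyz⟩ := Set.mem_iUnion₂.1 (h hy)
    have := hf z hyz
    simp only [Set.mem_singleton_iff] at this
    subst this; exact hz
  calc s.ncard ≤ (↑F : Set V).ncard := Set.ncard_le_ncard hsub F.finite_toSet
  _ = F.card := Set.ncard_coe_finset F

variable {C Q : Type*} [Fintype C] [Fintype Q] {A : C → Q → Prop}
  (hconn : (tannerGraph A).Connected) (hcheck : ∀ c, ∃ q, A c q)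

-- the projection to qubits
noncomputable def projQ (hcheck : ∀ c : C, ∃ q, A c q) : C ⊕ Q → Q :=
  Sum.elim (fun c => Classical.choose (hcheck c)) id

lemma projQ_dist (u : C ⊕ Q) :
    (tannerGraph A).dist u (Sum.inr (projQ hcheck u)) ≤ 1 := by
  rcases u with c | q
  · exact tanner_dist_check (Classical.choose_spec (hcheck c))
  · simp [projQ, SimpleGraph.dist_self]

lemma dist_singleton_ball {V : Type*} {H : SimpleGraph V} (hc : H.Connected) {r : ℝ}
    (hr : r < 1) (z : V) : {y | (H.dist z y : ℝ) ≤ r} ⊆ {z} := by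
  intro y hy
  simp only [Set.mem_setOf_eq] at hy
  have h0 : H.dist z y = 0 := by
    by_contra h
    have : (1 : ℝ) ≤ (H.dist z y : ℝ) := by exact_mod_cast Nat.one_le_iff_ne_zero.2 h
    linarith
  simp [Set.mem_singleton_iff, (hc.dist_eq_zero_iff.1 h0).symm]

include hconn hcheck in
/-- B → G direction, per space. -/
lemma coverG {β Cb r R : ℝ} (hβ : 0 ≤ β) (hCb : 0 < Cb)
    (hB : ∀ (x : C ⊕ Q) (r R : ℝ), 0 < r → r < R →
      ∃ F : Finset (C ⊕ Q), (F.card : ℝ) ≤ Cb * (R / r) ^ β ∧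
        {y | ((tannerGraph A).dist x y : ℝ) ≤ R} ⊆
          ⋃ z ∈ F, {y | ((tannerGraph A).dist z y : ℝ) ≤ r})
    (q0 : Q) (hr : 0 < r) (hrR : r < R) :
    ∃ F : Finset Q, (F.card : ℝ) ≤ ((Cb + 1) * 4 ^ β) * (R / r) ^ β ∧
      {y | ((connectivityGraph A).dist q0 y : ℝ) ≤ R} ⊆
        ⋃ z ∈ F, {y | ((connectivityGraph A).dist z y : ℝ) ≤ r} := by
  classical
  have hR : 0 < R := hr.trans hrR
  have hrpos : (0:ℝ) < R / r := div_pos hR hr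
  have hone : (1:ℝ) ≤ R / r := (one_le_div hr).2 hrR.le
  have hrpow1 : (1:ℝ) ≤ (R / r) ^ β := Real.one_le_rpow hone hβ
  by_cases hr1 : r < 1
  · -- small scale: count points
    set R'' : ℝ := 2 * max R 1 with hR''
    have hR''2 : (2:ℝ) ≤ R'' := by
      have : (1:ℝ) ≤ max R 1 := le_max_right _ _
      nlinarith
    obtain ⟨F, hFcard, hFcov⟩ := hB (Sum.inr q0) (1/2) R'' (by norm_num) (by linarith)
    -- the G-ball as a finset
    set F' : Finset Q := Finset.univ.filter
      (fun q => ((connectivityGraph A).dist q0 q : ℝ) ≤ R) with hF'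
    refine ⟨F', ?_, ?_⟩
    · -- cardinality
      have hsub : ↑F' ⊆ (Sum.inr ⁻¹' (F : Set (C ⊕ Q)) : Set Q) := by
        intro q hq
        simp only [hF', Finset.coe_filter, Set.mem_setOf_eq, Finset.mem_univ, true_and] at hq
        have hdB : ((tannerGraph A).dist (Sum.inr q0) (Sum.inr q) : ℝ) ≤ R'' := by
          rw [tanner_dist_eq hconn]
          push_cast
          have : (max R 1) ≥ R := le_max_left _ _
          nlinarith [(Nat.cast_nonneg ((connectivityGraph A).dist q0 q) : (0:ℝ) ≤ _)]
        have := hFcov hdB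
        obtain ⟨z, hz, hyz⟩ := Set.mem_iUnion₂.1 this
        have := dist_singleton_ball (H := tannerGraph A) hconn (by norm_num) z hyz
        simp only [Set.mem_singleton_iff] at this
        subst this
        exact hz
      have hcard : F'.card ≤ F.card := by
        have h1 : (↑F' : Set Q).ncard ≤ (Sum.inr ⁻¹' (F : Set (C ⊕ Q)) : Set Q).ncard :=
          Set.ncard_le_ncard hsub (Set.toFinite _)
        have h2 : (Sum.inr ⁻¹' (F : Set (C ⊕ Q)) : Set Q).ncard ≤ (↑F : Set (C ⊕ Q)).ncard := by
          exact Set.ncard_le_ncard_of_injOn Sum.inr (fun a ha => ha)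
            (fun a _ b _ h => Sum.inr.inj h) F.finite_toSet
        rw [Set.ncard_coe_finset] at h1 h2
        omega
      have hmax : max R 1 ≤ R / r := by
        rcases le_or_gt 1 R with h | h
        · rw [max_eq_left h]
          calc R = R / 1 := by ring
          _ ≤ R / r := by apply div_le_div_of_nonneg_left hR.le hr; linarith
        · rw [max_eq_right h.le]; exact hone
      calc (F'.card : ℝ) ≤ (F.card : ℝ) := by exact_mod_cast hcard
      _ ≤ Cb * (R'' / (1/2)) ^ β := hFcard
      _ = Cb * (4 * max R 1) ^ β := by
          have he : R'' / (1/2) = 4 * max R 1 := by rw [hR'']; ring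
          rw [he]
      _ ≤ (Cb + 1) * (4 * (R/r)) ^ β := by
          have hm : (4 * max R 1 : ℝ) ^ β ≤ (4 * (R/r)) ^ β :=
            Real.rpow_le_rpow (by positivity) (by nlinarith) hβ
          exact mul_le_mul (by linarith) hm (by positivity) (by linarith)
      _ = ((Cb + 1) * 4 ^ β) * (R / r) ^ β := by
          rw [Real.mul_rpow (by norm_num) hrpos.le]; ring
    · -- coverage: every point covers itself
      intro q hq
      simp only [Set.mem_setOf_eq] at hq
      apply Set.mem_iUnion₂.2
      refine ⟨q, by simp [hF', hq], by simp [SimpleGraph.dist_self]; positivity⟩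
  · -- large scale: push centers to qubits
    push_neg at hr1
    obtain ⟨F, hFcard, hFcov⟩ := hB (Sum.inr q0) r (2*R) hr (by linarith)
    refine ⟨F.image (projQ hcheck), ?_, ?_⟩
    · calc ((F.image (projQ hcheck)).card : ℝ) ≤ (F.card : ℝ) := by
            exact_mod_cast Finset.card_image_le
      _ ≤ Cb * (2*R / r) ^ β := hFcard
      _ = Cb * (2 ^ β * (R/r) ^ β) := by
          rw [← Real.mul_rpow (by norm_num) hrpos.le]; ring_nf
      _ ≤ (Cb + 1) * (4 ^ β * (R/r) ^ β) := by
          have h24 : (2:ℝ) ^ β ≤ 4 ^ β := Real.rpow_le_rpow (by norm_num) (by norm_num) hβ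
          exact mul_le_mul (by linarith)
            (mul_le_mul_of_nonneg_right h24 (Real.rpow_nonneg (by positivity) β))
            (by positivity) (by linarith)
      _ = ((Cb + 1) * 4 ^ β) * (R / r) ^ β := by ring
    · intro q hq
      simp only [Set.mem_setOf_eq] at hq
      have hdB : ((tannerGraph A).dist (Sum.inr q0) (Sum.inr q) : ℝ) ≤ 2*R := by
        rw [tanner_dist_eq hconn]; push_cast; linarith
      obtain ⟨z, hz, hyz⟩ := Set.mem_iUnion₂.1 (hFcov hdB)
      simp only [Set.mem_setOf_eq] at hyz
      refine Set.mem_iUnion₂.2 ⟨projQ hcheck z, Finset.mem_image_of_mem _ hz, ?_⟩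
      simp only [Set.mem_setOf_eq]
      have htri : (tannerGraph A).dist (Sum.inr (projQ hcheck z)) (Sum.inr q) ≤
          (tannerGraph A).dist (Sum.inr (projQ hcheck z)) z + (tannerGraph A).dist z (Sum.inr q) :=
        hconn.dist_triangle
      have h1 : (tannerGraph A).dist (Sum.inr (projQ hcheck z)) z ≤ 1 := by
        rw [SimpleGraph.dist_comm]; exact projQ_dist hcheck z
      have heq := tanner_dist_eq hconn (A := A) (projQ hcheck z) q
      have hR2 : ((tannerGraph A).dist (Sum.inr (projQ hcheck z)) (Sum.inr q) : ℝ) ≤ 1 + r := by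
        calc ((tannerGraph A).dist (Sum.inr (projQ hcheck z)) (Sum.inr q) : ℝ)
            ≤ ((tannerGraph A).dist (Sum.inr (projQ hcheck z)) z : ℝ)
              + ((tannerGraph A).dist z (Sum.inr q) : ℝ) := by exact_mod_cast htri
        _ ≤ 1 + r := by
            have : ((tannerGraph A).dist (Sum.inr (projQ hcheck z)) z : ℝ) ≤ 1 := by
              exact_mod_cast h1
            linarith
      have hfin : ((2 * (connectivityGraph A).dist (projQ hcheck z) q : ℕ) : ℝ) ≤ 1 + r :=
        heq ▸ hR2
      push_cast at hfin
      linarith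
end cover

section coverB
variable {C Q : Type*} [Fintype C] [Fintype Q] {A : C → Q → Prop}

open Classical in
/-- cardinality of balls in a connected graph under a covering hypothesis -/
lemma ball_card_le {V : Type*} [Fintype V] {H : SimpleGraph V} (hc : H.Connected)
    {β Cg : ℝ} (hβ : 0 ≤ β)
    (hG : ∀ (x : V) (r R : ℝ), 0 < r → r < R →
      ∃ F : Finset V, (F.card : ℝ) ≤ Cg * (R / r) ^ β ∧
        {y | (H.dist x y : ℝ) ≤ R} ⊆ ⋃ z ∈ F, {y | (H.dist z y : ℝ) ≤ r})
    (q : V) {R' : ℝ} (hR' : 1/2 < R') :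
    (((Finset.univ.filter fun y => (H.dist q y : ℝ) ≤ R')).card : ℝ) ≤ Cg * (2*R') ^ β := by
  obtain ⟨F, hFcard, hFcov⟩ := hG q (1/2) R' (by norm_num) hR'
  have hcov' : {y | (H.dist q y : ℝ) ≤ R'} ⊆ ⋃ z ∈ F, {y | (H.dist z y : ℝ) ≤ 1/2} := hFcov
  have hcard := ncard_le_of_cover_singletons
    (f := fun z => {y | (H.dist z y : ℝ) ≤ 1/2})
    (fun z => dist_singleton_ball hc (by norm_num) z) hcov'
  have heq : ((Finset.univ.filter fun y => (H.dist q y : ℝ) ≤ R') : Set V)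
      = {y | (H.dist q y : ℝ) ≤ R'} := by ext y; simp
  rw [← heq, Set.ncard_coe_finset] at hcard
  calc ((Finset.univ.filter fun y => (H.dist q y : ℝ) ≤ R').card : ℝ)
      ≤ (F.card : ℝ) := by exact_mod_cast hcard
  _ ≤ Cg * (R' / (1/2)) ^ β := hFcard
  _ = Cg * (2*R') ^ β := by rw [show R' / (1/2) = 2*R' by ring]

variable (hconn : (tannerGraph A).Connected) (hcheck : ∀ c, ∃ q, A c q)

include hconn hcheck in
set_option maxHeartbeats 2000000 in
/-- G → B direction, per space. -/
lemma coverB {β Cg μ r R : ℝ} (hβ : 0 ≤ β) (hCg : 0 < Cg) (hμ : 1 ≤ μ)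
    (hmult : ∀ S : Set Q, (({c : C | {q | A c q} = S}).ncard : ℝ) ≤ μ)
    (hG : ∀ (x : Q) (r R : ℝ), 0 < r → r < R →
      ∃ F : Finset Q, (F.card : ℝ) ≤ Cg * (R / r) ^ β ∧
        {y | ((connectivityGraph A).dist x y : ℝ) ≤ R} ⊆
          ⋃ z ∈ F, {y | ((connectivityGraph A).dist z y : ℝ) ≤ r})
    (x : C ⊕ Q) (hr : 0 < r) (hrR : r < R) :
    ∃ F : Finset (C ⊕ Q),
      (F.card : ℝ) ≤ ((Cg + 1) * 8 ^ β * (2 + μ * 2 ^ (⌊Cg * 2 ^ β⌋₊))) * (R / r) ^ β ∧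
      {y | ((tannerGraph A).dist x y : ℝ) ≤ R} ⊆
        ⋃ z ∈ F, {y | ((tannerGraph A).dist z y : ℝ) ≤ r} := by
  classical
  have hGc : (connectivityGraph A).Connected := conn_connected hconn hcheck
  obtain ⟨D, hD⟩ : ∃ D : ℕ, ⌊Cg * 2 ^ β⌋₊ = D := ⟨_, rfl⟩
  rw [hD]
  have hball1 : ∀ g : Q,
      (Finset.univ.filter fun y => ((connectivityGraph A).dist g y : ℝ) ≤ 1).card ≤ D := by
    intro g
    rw [← hD]
    apply Nat.le_floor
    have := ball_card_le hGc hβ hG g (R' := 1) (by norm_num)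
    calc ((Finset.univ.filter fun y => ((connectivityGraph A).dist g y : ℝ) ≤ 1).card : ℝ)
        ≤ Cg * (2*1) ^ β := this
    _ = Cg * 2 ^ β := by norm_num
  clear hD
  set Kb : ℝ := (Cg + 1) * 8 ^ β * (2 + μ * 2 ^ D) with hKb
  have h2D : (1:ℝ) ≤ 2 ^ D := one_le_pow₀ (by norm_num)
  have h8β : (1:ℝ) ≤ 8 ^ β := Real.one_le_rpow (by norm_num) hβ
  have hKb1 : (1:ℝ) ≤ Kb := by
    rw [hKb]
    have h1 : (1:ℝ) ≤ Cg + 1 := by linarith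
    have h2 : (1:ℝ) ≤ 2 + μ * 2 ^ D := by nlinarith
    calc (1:ℝ) = 1 * 1 * 1 := by ring
    _ ≤ (Cg + 1) * 8 ^ β * (2 + μ * 2 ^ D) := by
        apply mul_le_mul (mul_le_mul h1 h8β (by norm_num) (by linarith)) h2 (by norm_num)
          (by positivity)
  have hR : 0 < R := hr.trans hrR
  have hrpos : (0:ℝ) < R / r := div_pos hR hr
  have hrpow1 : (1:ℝ) ≤ (R / r) ^ β :=
    Real.one_le_rpow ((one_le_div hr).2 hrR.le) hβ
  obtain ⟨q0, hq0⟩ : ∃ q0 : Q, (tannerGraph A).dist x (Sum.inr q0) ≤ 1 :=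
    ⟨projQ hcheck x, projQ_dist hcheck x⟩
  by_cases hR1 : R < 1
  · -- tiny ball: it is a singleton
    refine ⟨{x}, ?_, ?_⟩
    · simp only [Finset.card_singleton, Nat.cast_one]
      nlinarith
    · intro y hy
      simp only [Set.mem_setOf_eq] at hy
      have : y = x := by
        have := dist_singleton_ball hconn (r := R) hR1 x hy
        simpa using this
      subst this
      exact Set.mem_iUnion₂.2 ⟨y, Finset.mem_singleton_self y,
        by simp [SimpleGraph.dist_self]; positivity⟩
  · push_neg at hR1
    -- the qubit ball at scale (R+2)/2
    set MF : Finset Q := Finset.univ.filter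
      (fun q => ((connectivityGraph A).dist q0 q : ℝ) ≤ (R+2)/2) with hMFdef
    have hMFcard : (MF.card : ℝ) ≤ Cg * (R+2) ^ β := by
      have := ball_card_le hGc hβ hG q0 (R' := (R+2)/2) (by linarith)
      calc (MF.card : ℝ) ≤ Cg * (2*((R+2)/2)) ^ β := this
      _ = Cg * (R+2) ^ β := by rw [show 2*((R+2)/2) = R+2 by ring]
    by_cases hr2 : r < 2
    · -- count all points of the ball
      set QF : Finset Q := Finset.univ.filter
        (fun q => ((tannerGraph A).dist x (Sum.inr q) : ℝ) ≤ R) with hQFdef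
      set CHF : Finset C := Finset.univ.filter
        (fun c => ((tannerGraph A).dist x (Sum.inl c) : ℝ) ≤ R) with hCHFdef
      set F : Finset (C ⊕ Q) := Finset.univ.filter
        (fun y => ((tannerGraph A).dist x y : ℝ) ≤ R) with hFdef
      have hFsub : F ⊆ CHF.image Sum.inl ∪ QF.image Sum.inr := by
        intro y hy
        rcases y with c | q
        · apply Finset.mem_union_left
          apply Finset.mem_image_of_mem
          simp only [hCHFdef, Finset.mem_filter, Finset.mem_univ, true_and]
          simp only [hFdef, Finset.mem_filter, Finset.mem_univ, true_and] at hy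
          exact hy
        · apply Finset.mem_union_right
          apply Finset.mem_image_of_mem
          simp only [hQFdef, Finset.mem_filter, Finset.mem_univ, true_and]
          simp only [hFdef, Finset.mem_filter, Finset.mem_univ, true_and] at hy
          exact hy
      have hFcard : F.card ≤ CHF.card + QF.card := by
        calc F.card ≤ (CHF.image Sum.inl ∪ QF.image Sum.inr).card :=
              Finset.card_le_card hFsub
        _ ≤ (CHF.image Sum.inl).card + (QF.image Sum.inr).card := Finset.card_union_le _ _
        _ ≤ CHF.card + QF.card :=
              Nat.add_le_add Finset.card_image_le Finset.card_image_le
      -- the qubit part embeds into MF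
      have hQF : QF ⊆ MF := by
        intro q hq
        simp only [hQFdef, Finset.mem_filter, Finset.mem_univ, true_and] at hq
        simp only [hMFdef, Finset.mem_filter, Finset.mem_univ, true_and]
        have htri : (tannerGraph A).dist (Sum.inr q0) (Sum.inr q) ≤
            (tannerGraph A).dist (Sum.inr q0) x + (tannerGraph A).dist x (Sum.inr q) :=
          hconn.dist_triangle
        have hsym : (tannerGraph A).dist (Sum.inr q0) x ≤ 1 := by
          rw [SimpleGraph.dist_comm]; exact hq0
        have heq := tanner_dist_eq hconn (A := A) q0 q
        have : ((2 * (connectivityGraph A).dist q0 q : ℕ) : ℝ) ≤ 1 + R := by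
          rw [← heq]
          calc ((tannerGraph A).dist (Sum.inr q0) (Sum.inr q) : ℝ)
              ≤ ((tannerGraph A).dist (Sum.inr q0) x : ℝ)
                + ((tannerGraph A).dist x (Sum.inr q) : ℝ) := by exact_mod_cast htri
          _ ≤ 1 + R := by
              have h1 : ((tannerGraph A).dist (Sum.inr q0) x : ℝ) ≤ 1 := by exact_mod_cast hsym
              linarith
        push_cast at this
        linarith
      -- the check part: count neighbourhoods
      set f : C → Finset Q := fun c => Finset.univ.filter (fun q => A c q) with hfdef
      have hfiber : ∀ T ∈ CHF.image f, (CHF.filter fun c => f c = T).card ≤ ⌊μ⌋₊ := by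
        intro T _
        apply Nat.le_floor
        have hsub : ((CHF.filter fun c => f c = T) : Set C) ⊆ {c : C | {q | A c q} = ↑T} := by
          intro c hc
          simp only [Finset.coe_filter, Set.mem_setOf_eq] at hc
          obtain ⟨-, hfc⟩ := hc
          simp only [Set.mem_setOf_eq]
          ext q
          rw [← hfc]
          simp [hfdef]
        calc (((CHF.filter fun c => f c = T)).card : ℝ)
            = (((CHF.filter fun c => f c = T) : Set C)).ncard := by
              rw [Set.ncard_coe_finset]
        _ ≤ ({c : C | {q | A c q} = ↑T}).ncard := by
              exact_mod_cast Set.ncard_le_ncard hsub (Set.toFinite _)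
        _ ≤ μ := hmult _
      have hCHF1 : CHF.card ≤ ⌊μ⌋₊ * (CHF.image f).card :=
        Finset.card_le_mul_card_image _ _ hfiber
      -- neighbourhoods live in small balls around points of MF
      have himg : CHF.image f ⊆ MF.biUnion
          (fun g => (Finset.univ.filter fun y => ((connectivityGraph A).dist g y : ℝ) ≤ 1).powerset) := by
        intro T hT
        obtain ⟨c, hc, rfl⟩ := Finset.mem_image.1 hT
        simp only [hCHFdef, Finset.mem_filter, Finset.mem_univ, true_and] at hc
        obtain ⟨g, hg⟩ := hcheck c
        apply Finset.mem_biUnion.2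
        have hdist_cg : (tannerGraph A).dist (Sum.inl c) (Sum.inr g) ≤ 1 := tanner_dist_check hg
        have hginMF : g ∈ MF := by
          simp only [hMFdef, Finset.mem_filter, Finset.mem_univ, true_and]
          have htri : (tannerGraph A).dist (Sum.inr q0) (Sum.inr g) ≤
              ((tannerGraph A).dist (Sum.inr q0) x + (tannerGraph A).dist x (Sum.inl c))
                + (tannerGraph A).dist (Sum.inl c) (Sum.inr g) := by
            calc (tannerGraph A).dist (Sum.inr q0) (Sum.inr g)
                ≤ (tannerGraph A).dist (Sum.inr q0) (Sum.inl c)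
                  + (tannerGraph A).dist (Sum.inl c) (Sum.inr g) := hconn.dist_triangle
            _ ≤ _ := by
                have := hconn.dist_triangle (u := Sum.inr q0) (v := x) (w := Sum.inl (α := C) c)
                omega
          have hsym : (tannerGraph A).dist (Sum.inr q0) x ≤ 1 := by
            rw [SimpleGraph.dist_comm]; exact hq0
          have heq := tanner_dist_eq hconn (A := A) q0 g
          have hfin : ((2 * (connectivityGraph A).dist q0 g : ℕ) : ℝ) ≤ (1 + R) + 1 := by
            rw [← heq]
            calc ((tannerGraph A).dist (Sum.inr q0) (Sum.inr g) : ℝ)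
                ≤ (((tannerGraph A).dist (Sum.inr q0) x : ℕ) + ((tannerGraph A).dist x (Sum.inl c) : ℕ)
                  + ((tannerGraph A).dist (Sum.inl c) (Sum.inr g) : ℕ) : ℝ) := by
                    exact_mod_cast htri
            _ ≤ (1 + R) + 1 := by
                push_cast
                have h1 : ((tannerGraph A).dist (Sum.inr q0) x : ℝ) ≤ 1 := by exact_mod_cast hsym
                have h3 : ((tannerGraph A).dist (Sum.inl c) (Sum.inr g) : ℝ) ≤ 1 := by
                  exact_mod_cast hdist_cg
                linarith
          push_cast at hfin
          linarith
        refine ⟨g, hginMF, ?_⟩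
        apply Finset.mem_powerset.2
        intro q hq
        simp only [hfdef, Finset.mem_filter, Finset.mem_univ, true_and] at hq
        simp only [Finset.mem_filter, Finset.mem_univ, true_and]
        by_cases hqg : q = g
        · subst hqg; simp [SimpleGraph.dist_self]
        · have hadj : (connectivityGraph A).Adj g q := conn_adj_iff.2 ⟨Ne.symm hqg, c, hg, hq⟩
          have : (connectivityGraph A).dist g q = 1 := SimpleGraph.dist_eq_one_iff_adj.2 hadj
          rw [this]; norm_num
      have himgcard : (CHF.image f).card ≤ MF.card * 2 ^ D := by
        calc (CHF.image f).card ≤ (MF.biUnion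
            (fun g => (Finset.univ.filter fun y => ((connectivityGraph A).dist g y : ℝ) ≤ 1).powerset)).card :=
              Finset.card_le_card himg
        _ ≤ ∑ g ∈ MF, ((Finset.univ.filter fun y => ((connectivityGraph A).dist g y : ℝ) ≤ 1).powerset).card :=
              Finset.card_biUnion_le
        _ ≤ ∑ _g ∈ MF, 2 ^ D := by
              apply Finset.sum_le_sum
              intro g _
              rw [Finset.card_powerset]
              exact Nat.pow_le_pow_right (by norm_num) (hball1 g)
        _ = MF.card * 2 ^ D := by rw [Finset.sum_const, smul_eq_mul]
      -- put the counts together, in ℝ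
      have hμ0 : (⌊μ⌋₊ : ℝ) ≤ μ := Nat.floor_le (by linarith)
      have htotal : (F.card : ℝ) ≤ (1 + μ * 2 ^ D) * (Cg * (R+2) ^ β) := by
        have h1 : (CHF.card : ℝ) ≤ μ * ((MF.card : ℝ) * 2 ^ D) := by
          calc (CHF.card : ℝ) ≤ (⌊μ⌋₊ : ℝ) * ((CHF.image f).card : ℝ) := by
                exact_mod_cast hCHF1
          _ ≤ (⌊μ⌋₊ : ℝ) * ((MF.card : ℝ) * 2 ^ D) := by
              apply mul_le_mul_of_nonneg_left _ (Nat.cast_nonneg _)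
              exact_mod_cast himgcard
          _ ≤ μ * ((MF.card : ℝ) * 2 ^ D) := by
              apply mul_le_mul_of_nonneg_right hμ0
              positivity
        have h2 : (QF.card : ℝ) ≤ (MF.card : ℝ) := by
          exact_mod_cast Finset.card_le_card hQF
        have h3 : (F.card : ℝ) ≤ (CHF.card : ℝ) + (QF.card : ℝ) := by exact_mod_cast hFcard
        have hMF0 : (0:ℝ) ≤ (MF.card : ℝ) := Nat.cast_nonneg _
        calc (F.card : ℝ) ≤ μ * ((MF.card : ℝ) * 2 ^ D) + (MF.card : ℝ) := by linarith
        _ = (1 + μ * 2 ^ D) * (MF.card : ℝ) := by ring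
        _ ≤ (1 + μ * 2 ^ D) * (Cg * (R+2) ^ β) := by
            apply mul_le_mul_of_nonneg_left hMFcard
            nlinarith
      refine ⟨F, ?_, ?_⟩
      · -- arithmetic
        have h34 : ((R+2):ℝ) ^ β ≤ (6 * (R/2)) ^ β := by
          apply Real.rpow_le_rpow (by linarith) (by linarith) hβ
        have hr2' : (6 * (R/2) : ℝ) ^ β ≤ (6 * (R/r)) ^ β := by
          apply Real.rpow_le_rpow (by positivity) _ hβ
          have : R / 2 ≤ R / r := by
            apply div_le_div_of_nonneg_left hR.le hr hr2.le
          linarith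
        have hexp : ((6 * (R/r)) : ℝ) ^ β = 6 ^ β * (R/r) ^ β :=
          Real.mul_rpow (by norm_num) hrpos.le
        have h68 : (6:ℝ) ^ β ≤ 8 ^ β := Real.rpow_le_rpow (by norm_num) (by norm_num) hβ
        have hx : (0:ℝ) ≤ (R/r) ^ β := Real.rpow_nonneg hrpos.le β
        have h6nn : (0:ℝ) ≤ (6:ℝ) ^ β := Real.rpow_nonneg (by norm_num) β
        have hA1 : (1 + μ * 2 ^ D) ≤ (2 + μ * 2 ^ D) := by linarith
        have hAnn : (0:ℝ) ≤ 1 + μ * 2 ^ D := by nlinarith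
        have hcoef : Cg * 6 ^ β * (1 + μ * 2 ^ D) ≤ (Cg + 1) * 8 ^ β * (2 + μ * 2 ^ D) := by
          apply mul_le_mul (mul_le_mul (by linarith) h68 h6nn (by linarith)) hA1 hAnn
            (by positivity)
        calc (F.card : ℝ) ≤ (1 + μ * 2 ^ D) * (Cg * (R+2) ^ β) := htotal
        _ ≤ (1 + μ * 2 ^ D) * (Cg * (6 ^ β * (R/r) ^ β)) := by
            apply mul_le_mul_of_nonneg_left _ hAnn
            apply mul_le_mul_of_nonneg_left _ hCg.le
            rw [← hexp]
            exact h34.trans hr2'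
        _ = (Cg * 6 ^ β * (1 + μ * 2 ^ D)) * (R/r) ^ β := by ring
        _ ≤ ((Cg + 1) * 8 ^ β * (2 + μ * 2 ^ D)) * (R/r) ^ β :=
            mul_le_mul_of_nonneg_right hcoef hx
        _ = Kb * (R / r) ^ β := by rw [hKb]
      · intro y hy
        simp only [Set.mem_setOf_eq] at hy
        refine Set.mem_iUnion₂.2 ⟨y, ?_, by simp [SimpleGraph.dist_self]; positivity⟩
        simp only [hFdef, Finset.mem_filter, Finset.mem_univ, true_and]
        exact hy
    · -- large r : reduce to a qubit cover at scale r/4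
      push_neg at hr2
      have hR2 : (2:ℝ) ≤ R := by linarith
      have harg1 : (0:ℝ) < r/4 := by linarith
      have harg2 : r/4 < (R+2)/2 := by linarith
      obtain ⟨Fg, hFgcard, hFgcov⟩ := hG q0 (r/4) ((R+2)/2) harg1 harg2
      refine ⟨Fg.image (Sum.inr : Q → C ⊕ Q), ?_, ?_⟩
      · have h1 : ((Fg.image (Sum.inr : Q → C ⊕ Q)).card : ℝ) ≤ (Fg.card : ℝ) := by
          exact_mod_cast Finset.card_image_le
        have hexp : ((R+2)/2) / (r/4) = (2*R+4)/r := by ring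
        have h2 : Cg * (((R+2)/2) / (r/4)) ^ β ≤ Cg * (4 * (R/r)) ^ β := by
          apply mul_le_mul_of_nonneg_left _ hCg.le
          apply Real.rpow_le_rpow (by rw [hexp]; positivity) _ hβ
          rw [hexp, show 4 * (R/r) = (4*R)/r by ring]
          exact (div_le_div_iff_of_pos_right hr).2 (by linarith)
        have hexp2 : ((4 * (R/r)) : ℝ) ^ β = 4 ^ β * (R/r) ^ β :=
          Real.mul_rpow (by norm_num) hrpos.le
        have h48 : (4:ℝ) ^ β ≤ 8 ^ β := Real.rpow_le_rpow (by norm_num) (by norm_num) hβ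
        calc ((Fg.image (Sum.inr : Q → C ⊕ Q)).card : ℝ) ≤ Cg * (((R+2)/2) / (r/4)) ^ β :=
              h1.trans hFgcard
        _ ≤ Cg * (4 ^ β * (R/r) ^ β) := by rw [← hexp2]; exact h2
        _ = (Cg * 4 ^ β) * (R/r) ^ β := by ring
        _ ≤ ((Cg + 1) * 8 ^ β * (2 + μ * 2 ^ D)) * (R/r) ^ β := by
            apply mul_le_mul_of_nonneg_right _ (Real.rpow_nonneg hrpos.le β)
            have h4nn : (0:ℝ) ≤ (4:ℝ) ^ β := Real.rpow_nonneg (by norm_num) β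
            have hAnn2 : (2:ℝ) ≤ 2 + μ * 2 ^ D := by nlinarith
            have : Cg * 4 ^ β ≤ (Cg + 1) * 8 ^ β := by
              apply mul_le_mul (by linarith) h48 h4nn (by linarith)
            nlinarith [Real.rpow_nonneg (show (0:ℝ) ≤ 8 by norm_num) β]
        _ = Kb * (R / r) ^ β := by rw [hKb]
      · intro y hy
        simp only [Set.mem_setOf_eq] at hy
        obtain ⟨qy, hqy⟩ : ∃ qy : Q, (tannerGraph A).dist y (Sum.inr qy) ≤ 1 :=
          ⟨projQ hcheck y, projQ_dist hcheck y⟩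
        -- qy is in the G-ball around q0
        have hqyball : ((connectivityGraph A).dist q0 qy : ℝ) ≤ (R+2)/2 := by
          have htri : (tannerGraph A).dist (Sum.inr q0) (Sum.inr qy) ≤
              ((tannerGraph A).dist (Sum.inr q0) x + (tannerGraph A).dist x y)
                + (tannerGraph A).dist y (Sum.inr qy) := by
            calc (tannerGraph A).dist (Sum.inr q0) (Sum.inr qy)
                ≤ (tannerGraph A).dist (Sum.inr q0) y
                  + (tannerGraph A).dist y (Sum.inr qy) := hconn.dist_triangle
            _ ≤ _ := by
                have := hconn.dist_triangle (u := Sum.inr (α := C) q0) (v := x) (w := y)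
                omega
          have hsym : (tannerGraph A).dist (Sum.inr q0) x ≤ 1 := by
            rw [SimpleGraph.dist_comm]; exact hq0
          have heq := tanner_dist_eq hconn (A := A) q0 qy
          have hfin : ((2 * (connectivityGraph A).dist q0 qy : ℕ) : ℝ) ≤ (1 + R) + 1 := by
            rw [← heq]
            calc ((tannerGraph A).dist (Sum.inr q0) (Sum.inr qy) : ℝ)
                ≤ (((tannerGraph A).dist (Sum.inr q0) x : ℕ) + ((tannerGraph A).dist x y : ℕ)
                  + ((tannerGraph A).dist y (Sum.inr qy) : ℕ) : ℝ) := by exact_mod_cast htri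
            _ ≤ (1 + R) + 1 := by
                push_cast
                have h1 : ((tannerGraph A).dist (Sum.inr q0) x : ℝ) ≤ 1 := by exact_mod_cast hsym
                have h3 : ((tannerGraph A).dist y (Sum.inr qy) : ℝ) ≤ 1 := by exact_mod_cast hqy
                linarith
          push_cast at hfin
          linarith
        obtain ⟨z, hz, hyz⟩ := Set.mem_iUnion₂.1 (hFgcov hqyball)
        simp only [Set.mem_setOf_eq] at hyz
        refine Set.mem_iUnion₂.2 ⟨Sum.inr z, Finset.mem_image_of_mem _ hz, ?_⟩
        simp only [Set.mem_setOf_eq]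
        have htri : (tannerGraph A).dist (Sum.inr z) y ≤
            (tannerGraph A).dist (Sum.inr z) (Sum.inr qy) + (tannerGraph A).dist (Sum.inr qy) y :=
          hconn.dist_triangle
        have hsym : (tannerGraph A).dist (Sum.inr qy) y ≤ 1 := by
          rw [SimpleGraph.dist_comm]; exact hqy
        have heq := tanner_dist_eq hconn (A := A) z qy
        have h2d : ((2 * (connectivityGraph A).dist z qy : ℕ) : ℝ) ≤ 2 * (r/4) := by
          push_cast; linarith
        have : ((tannerGraph A).dist (Sum.inr z) (Sum.inr qy) : ℝ) ≤ r/2 := by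
          rw [heq]
          push_cast at h2d ⊢
          linarith
        calc ((tannerGraph A).dist (Sum.inr z) y : ℝ)
            ≤ ((tannerGraph A).dist (Sum.inr z) (Sum.inr qy) : ℝ)
              + ((tannerGraph A).dist (Sum.inr qy) y : ℝ) := by exact_mod_cast htri
        _ ≤ r/2 + 1 := by
            have h1 : ((tannerGraph A).dist (Sum.inr qy) y : ℝ) ≤ 1 := by exact_mod_cast hsym
            linarith
        _ ≤ r := by linarith
end coverB

/-- For a family of finite connected bipartite (Tanner) graphs in which every check
has at least one neighbor and at most `μ` checks share any given neighborhood, the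
Assouad dimension of the Tanner graph family equals that of the associated
connectivity graph family (both possibly `+∞`). -/
theorem tanner_connectivity_assouadDim_eq {ι : Type*} (C Q : ι → Type*)
    [∀ i, Fintype (C i)] [∀ i, Fintype (Q i)]
    (A : ∀ i, C i → Q i → Prop)
    (hconn : ∀ i, (tannerGraph (A i)).Connected)
    (hcheck : ∀ (i : ι) (c : C i), ∃ q, A i c q)
    (μ : ℝ) (hμ : 1 ≤ μ)
    (hmult : ∀ (i : ι) (S : Set (Q i)),
      (({c : C i | {q | A i c q} = S}).ncard : ℝ) ≤ μ) :
    assouadDim (fun i => C i ⊕ Q i)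
        (fun i u v => ((tannerGraph (A i)).dist u v : ℝ)) =
      assouadDim Q (fun i u v => ((connectivityGraph (A i)).dist u v : ℝ)) := by
  unfold assouadDim
  congr 1
  ext b
  simp only [Set.mem_setOf_eq]
  constructor
  · rintro ⟨β, rfl, hβ, Cb, hCb, hB⟩
    refine ⟨β, rfl, hβ, (Cb + 1) * 4 ^ β, ?_, ?_⟩
    · have : (0:ℝ) < 4 ^ β := Real.rpow_pos_of_pos (by norm_num) β
      nlinarith
    · intro i q0 r R hr hrR
      exact coverG (hconn i) (hcheck i) hβ hCb (hB i) q0 hr hrR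
  · rintro ⟨β, rfl, hβ, Cg, hCg, hG⟩
    refine ⟨β, rfl, hβ, (Cg + 1) * 8 ^ β * (2 + μ * 2 ^ (⌊Cg * 2 ^ β⌋₊)), ?_, ?_⟩
    · have h8 : (0:ℝ) < 8 ^ β := Real.rpow_pos_of_pos (by norm_num) β
      have h2D : (0:ℝ) < 2 ^ (⌊Cg * 2 ^ β⌋₊) := by positivity
      have h2' : (0:ℝ) < 2 + μ * 2 ^ (⌊Cg * 2 ^ β⌋₊) := by nlinarith
      have := mul_pos (mul_pos (show (0:ℝ) < Cg + 1 by linarith) h8) h2'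
      linarith
    · intro i x r R hr hrR
      exact coverB (hconn i) (hcheck i) hβ hCg hμ (hmult i) (hG i) x hr hrR
end

section
/- Let {(G_i,d_i)}_{i∈ℕ} be a sequence of finite connected graphs with shortest-path metrics whose Assouad dimension as a family is β ≥ 1. Choose a base point x_i ∈ G_i for each i, and real numbers 0 ≤ l₁ < l₂ < ⋯ with l_{i+1} − l_i > 2·diam(G_i) for every i. Let G̃ be the metric space obtained by gluing each G_i to the ray [0,∞) at the point l_i; explicitly, the underlying set is the disjoint union of [0,∞) and the sets G_i∖{x_i}, with distances d(s,t) = |s−t| for s,t ∈ [0,∞), d(a,t) = d_i(a,x_i) + |l_i − t| for a ∈ G_i and t ∈ [0,∞), d(a,b) = d_i(a,b) for a,b ∈ G_i, and d(a,b) = d_i(a,x_i) + |l_i − l_j| + d_j(x_j,b) for a ∈ G_i, b ∈ G_j with i ≠ j. Then the Assouad dimension of the single metric space G̃ equals β, the Assouad dimension of the family {G_i}_{i∈ℕ}. -/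
open Set
open scoped ENNReal

/-- The diameter of a finite graph for the shortest-path metric. -/
noncomputable def graphDiam {V : Type*} [Fintype V] (G : SimpleGraph V) : ℕ :=
  Finset.univ.sup fun p : V × V => G.dist p.1 p.2

/-- The underlying set of the space obtained by gluing the graphs `V i` to the ray
`[0,∞)`, each at its base point `x i`: the disjoint union of `[0,∞)` and the sets
`V i ∖ {x i}`. -/
def Glued (V : ℕ → Type*) (x : ∀ i, V i) : Type _ :=
  {t : ℝ // 0 ≤ t} ⊕ (Σ i : ℕ, {a : V i // a ≠ x i})

/-- The glued distance on `Glued V x`, where each base point `x i` is attached to the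
ray at the point `l i`:  distances within the ray are `|s−t|`; the distance from a
point `a ∈ V i` to a ray point `t` is `d_i(a, x i) + |l i − t|`; distances within
`V i` are the graph distances; and the distance from `a ∈ V i` to `b ∈ V j` (`i ≠ j`)
is `d_i(a, x i) + |l i − l j| + d_j(x j, b)`. -/
noncomputable def gluedDist (V : ℕ → Type*) (G : ∀ i, SimpleGraph (V i))
    (x : ∀ i, V i) (l : ℕ → ℝ) : Glued V x → Glued V x → ℝ
  | Sum.inl s, Sum.inl t => |s.1 - t.1|
  | Sum.inl t, Sum.inr ⟨i, a⟩ => ((G i).dist a.1 (x i) : ℝ) + |l i - t.1|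
  | Sum.inr ⟨i, a⟩, Sum.inl t => ((G i).dist a.1 (x i) : ℝ) + |l i - t.1|
  | Sum.inr ⟨i, a⟩, Sum.inr ⟨j, b⟩ =>
      if h : i = j then ((G i).dist a.1 (cast (congrArg V h.symm) b.1) : ℝ)
      else ((G i).dist a.1 (x i) : ℝ) + |l i - l j| + ((G j).dist (x j) b.1 : ℝ)

/-! ### Auxiliary lemmas -/

lemma aux_rpow_superadd {x y p : ℝ} (hx : 0 ≤ x) (hy : 0 ≤ y) (hp : 1 ≤ p) :
    x ^ p + y ^ p ≤ (x + y) ^ p := by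
  have h := NNReal.add_rpow_le_rpow_add x.toNNReal y.toNNReal hp
  have h2 := NNReal.coe_le_coe.2 h
  push_cast [Real.coe_toNNReal x hx, Real.coe_toNNReal y hy] at h2
  exact h2

lemma aux_sum_rpow_le {p : ℝ} (hp : 1 ≤ p) (J : Finset ℕ) (f : ℕ → ℝ)
    (hf : ∀ j ∈ J, 0 ≤ f j) :
    ∑ j ∈ J, f j ^ p ≤ (∑ j ∈ J, f j) ^ p := by
  classical
  induction J using Finset.induction_on with
  | empty => simp [Real.zero_rpow (by linarith : p ≠ 0)]
  | @insert a J' hnotmem ih =>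
    have hfa : 0 ≤ f a := hf a (Finset.mem_insert_self _ _)
    have hf' : ∀ j ∈ J', 0 ≤ f j := fun j hj => hf j (Finset.mem_insert_of_mem hj)
    have hsum : 0 ≤ ∑ j ∈ J', f j := Finset.sum_nonneg hf'
    rw [Finset.sum_insert hnotmem, Finset.sum_insert hnotmem]
    calc f a ^ p + ∑ j ∈ J', f j ^ p ≤ f a ^ p + (∑ j ∈ J', f j) ^ p := by
          linarith [ih hf']
      _ ≤ (f a + ∑ j ∈ J', f j) ^ p := aux_rpow_superadd hfa hsum hp

lemma aux_telescope_Ico (l : ℕ → ℝ) {a b : ℕ} (h : a ≤ b) :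
    ∑ j ∈ Finset.Ico a b, (l (j + 1) - l j) = l b - l a := by
  induction b, h using Nat.le_induction with
  | base => simp
  | succ b hab ih => rw [Finset.sum_Ico_succ_top hab, ih]; ring

section GluedHelpers

variable {V : ℕ → Type*} (G : ∀ i, SimpleGraph (V i)) (x : ∀ i, V i) (l : ℕ → ℝ)

lemma aux_dist_le_graphDiam [∀ i, Fintype (V i)] (i : ℕ) (a b : V i) :
    (G i).dist a b ≤ graphDiam (G i) :=
  Finset.le_sup (f := fun p : V i × V i => (G i).dist p.1 p.2) (Finset.mem_univ (a, b))

lemma gd_same (i : ℕ) (a b : {a : V i // a ≠ x i}) :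
    gluedDist V G x l (Sum.inr ⟨i, a⟩) (Sum.inr ⟨i, b⟩) = ((G i).dist a.1 b.1 : ℝ) := by
  show dite _ _ _ = _
  rw [dif_pos rfl]; norm_num [cast_eq]

lemma gd_ne {i j : ℕ} (h : i ≠ j) (a : {a : V i // a ≠ x i}) (b : {a : V j // a ≠ x j}) :
    gluedDist V G x l (Sum.inr ⟨i, a⟩) (Sum.inr ⟨j, b⟩)
      = ((G i).dist a.1 (x i) : ℝ) + |l i - l j| + ((G j).dist (x j) b.1 : ℝ) := by
  show dite _ _ _ = _
  rw [dif_neg h]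

open scoped Classical in
noncomputable def iota (hl : ∀ i, 0 ≤ l i) (i : ℕ) (a : V i) : Glued V x :=
  if h : a = x i then Sum.inl ⟨l i, hl i⟩ else Sum.inr ⟨i, ⟨a, h⟩⟩

lemma iota_inr (hl : ∀ i, 0 ≤ l i) (i : ℕ) (a : {a : V i // a ≠ x i}) :
    (Sum.inr ⟨i, a⟩ : Glued V x) = iota x l hl i a.1 := by
  obtain ⟨a, ha⟩ := a
  simp [iota, ha]

lemma iota_pos (hl : ∀ i, 0 ≤ l i) (i : ℕ) (a : V i) (h : a = x i) :
    iota x l hl i a = (Sum.inl ⟨l i, hl i⟩ : Glued V x) := by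
  unfold iota; exact dif_pos h

lemma iota_neg (hl : ∀ i, 0 ≤ l i) (i : ℕ) (a : V i) (h : ¬a = x i) :
    iota x l hl i a = (Sum.inr ⟨i, ⟨a, h⟩⟩ : Glued V x) := by
  unfold iota; exact dif_neg h

lemma gd_iota_iota (hl : ∀ i, 0 ≤ l i) (i : ℕ) (a b : V i) :
    gluedDist V G x l (iota x l hl i a) (iota x l hl i b) = ((G i).dist a b : ℝ) := by
  by_cases ha : a = x i
  · by_cases hb : b = x i
    · rw [iota_pos x l hl i a ha, iota_pos x l hl i b hb]
      show |l i - l i| = _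
      subst ha; subst hb; simp [SimpleGraph.dist_self]
    · rw [iota_pos x l hl i a ha, iota_neg x l hl i b hb]
      show ((G i).dist b (x i) : ℝ) + |l i - l i| = _
      subst ha; simp [SimpleGraph.dist_comm]
  · by_cases hb : b = x i
    · rw [iota_neg x l hl i a ha, iota_pos x l hl i b hb]
      show ((G i).dist a (x i) : ℝ) + |l i - l i| = _
      subst hb; simp
    · rw [iota_neg x l hl i a ha, iota_neg x l hl i b hb]
      exact gd_same G x l i ⟨a, ha⟩ ⟨b, hb⟩

lemma gd_ray_triangle (hconn : ∀ i, (G i).Connected) (t : {t : ℝ // 0 ≤ t})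
    (p q : Glued V x) :
    gluedDist V G x l (Sum.inl t) q ≤
      gluedDist V G x l (Sum.inl t) p + gluedDist V G x l p q := by
  obtain ⟨t0, ht0⟩ := t
  match p, q with
  | Sum.inl ⟨s, hs⟩, Sum.inl ⟨u, hu⟩ =>
    show |t0 - u| ≤ |t0 - s| + |s - u|
    calc |t0 - u| = |(t0 - s) + (s - u)| := by ring_nf
      _ ≤ _ := abs_add_le _ _
  | Sum.inl ⟨s, hs⟩, Sum.inr ⟨j, b⟩ =>
    show ((G j).dist b.1 (x j) : ℝ) + |l j - t0| ≤
      |t0 - s| + (((G j).dist b.1 (x j) : ℝ) + |l j - s|)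
    have : |l j - t0| ≤ |t0 - s| + |l j - s| := by
      calc |l j - t0| = |(s - t0) + (l j - s)| := by ring_nf
        _ ≤ |s - t0| + |l j - s| := abs_add_le _ _
        _ = |t0 - s| + |l j - s| := by rw [abs_sub_comm]
    linarith
  | Sum.inr ⟨i, a⟩, Sum.inl ⟨u, hu⟩ =>
    show |t0 - u| ≤ (((G i).dist a.1 (x i) : ℝ) + |l i - t0|) +
      (((G i).dist a.1 (x i) : ℝ) + |l i - u|)
    have h1 : |t0 - u| ≤ |l i - t0| + |l i - u| := by
      calc |t0 - u| = |(l i - u) - (l i - t0)| := by ring_nf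
        _ ≤ |l i - u| + |l i - t0| := abs_sub _ _
        _ = |l i - t0| + |l i - u| := by ring
    have h2 : (0:ℝ) ≤ ((G i).dist a.1 (x i) : ℝ) := Nat.cast_nonneg _
    linarith
  | Sum.inr ⟨i, a⟩, Sum.inr ⟨j, b⟩ =>
    by_cases hij : i = j
    · subst hij
      rw [gd_same]
      show _ ≤ (((G i).dist a.1 (x i) : ℝ) + |l i - t0|) + _
      have htr : (G i).dist b.1 (x i) ≤ (G i).dist b.1 a.1 + (G i).dist a.1 (x i) :=
        (hconn i).dist_triangle
      have hc : (G i).dist b.1 a.1 = (G i).dist a.1 b.1 := SimpleGraph.dist_comm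
      show ((G i).dist b.1 (x i) : ℝ) + |l i - t0| ≤ _
      have htr' : ((G i).dist b.1 (x i) : ℝ) ≤
          ((G i).dist a.1 b.1 : ℝ) + ((G i).dist a.1 (x i) : ℝ) := by
        rw [hc] at htr; exact_mod_cast htr
      linarith
    · rw [gd_ne G x l hij]
      show ((G j).dist b.1 (x j) : ℝ) + |l j - t0| ≤
        (((G i).dist a.1 (x i) : ℝ) + |l i - t0|) +
          (((G i).dist a.1 (x i) : ℝ) + |l i - l j| + ((G j).dist (x j) b.1 : ℝ))
      have h1 : |l j - t0| ≤ |l i - t0| + |l i - l j| := by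
        calc |l j - t0| = |(l i - t0) - (l i - l j)| := by ring_nf
          _ ≤ |l i - t0| + |l i - l j| := abs_sub _ _
      have hc : (G j).dist b.1 (x j) = (G j).dist (x j) b.1 := SimpleGraph.dist_comm
      have h2 : (0:ℝ) ≤ ((G i).dist a.1 (x i) : ℝ) := Nat.cast_nonneg _
      rw [hc]
      linarith

end GluedHelpers

section MainLemmas

variable {V : ℕ → Type*} [∀ i, Fintype (V i)] {G : ∀ i, SimpleGraph (V i)}
  {x : ∀ i, V i} {l : ℕ → ℝ}

open scoped Classical in
noncomputable def glueProj (G : ∀ i, SimpleGraph (V i)) (x : ∀ i, V i) (i : ℕ) :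
    Glued V x → V i
  | Sum.inl _ => x i
  | Sum.inr ⟨j, b⟩ => if h : j = i then cast (congrArg V h) b.1 else x i

lemma glueProj_le (hl : ∀ i, 0 ≤ l i) (i : ℕ) (z : Glued V x) (y : V i) :
    ((G i).dist (glueProj G x i z) y : ℝ) ≤ gluedDist V G x l z (iota x l hl i y) := by
  match z with
  | Sum.inl t =>
    show ((G i).dist (x i) y : ℝ) ≤ _
    by_cases hy : y = x i
    · subst hy
      rw [iota_pos x l hl _ _ rfl]
      show ((G i).dist (x i) (x i) : ℝ) ≤ |t.1 - l i|
      simp [SimpleGraph.dist_self, abs_nonneg]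
    · rw [iota_neg x l hl _ _ hy]
      show ((G i).dist (x i) y : ℝ) ≤ ((G i).dist y (x i) : ℝ) + |l i - t.1|
      rw [SimpleGraph.dist_comm]
      have := abs_nonneg (l i - t.1)
      linarith
  | Sum.inr ⟨j, b⟩ =>
    by_cases hj : j = i
    · subst hj
      show ((G j).dist (dite _ _ _) y : ℝ) ≤ _
      rw [dif_pos rfl]
      by_cases hy : y = x j
      · subst hy
        rw [iota_pos x l hl _ _ rfl]
        show ((G j).dist (cast _ b.1) (x j) : ℝ) ≤ ((G j).dist b.1 (x j) : ℝ) + |l j - l j|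
        norm_num [cast_eq]
      · rw [iota_neg x l hl _ _ hy]
        rw [gd_same]
        norm_num [cast_eq]
    · have hp : glueProj G x i (Sum.inr ⟨j, b⟩) = x i := by
        show dite _ _ _ = _; rw [dif_neg hj]
      rw [hp]
      have h1 : (0:ℝ) ≤ ((G j).dist b.1 (x j) : ℝ) := Nat.cast_nonneg _
      have h2 := abs_nonneg (l j - l i)
      by_cases hy : y = x i
      · subst hy
        rw [iota_pos x l hl _ _ rfl]
        show ((G i).dist (x i) (x i) : ℝ) ≤ ((G j).dist b.1 (x j) : ℝ) + |l j - l i|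
        simp only [SimpleGraph.dist_self, Nat.cast_zero]
        linarith
      · rw [iota_neg x l hl _ _ hy]
        rw [gd_ne G x l hj]
        have h3 : (0:ℝ) ≤ ((G i).dist (x i) y : ℝ) := Nat.cast_nonneg _
        linarith

lemma backward (hl : ∀ i, 0 ≤ l i) {β C : ℝ}
    (h : AssouadBoundWith (fun _ : Unit => Glued V x)
      (fun _ u v => gluedDist V G x l u v) β C) :
    AssouadBoundWith V (fun i u v => ((G i).dist u v : ℝ)) β C := by
  classical
  intro i x0 r R hr hrR
  obtain ⟨F, hFcard, hFcov⟩ := h () (iota x l hl i x0) r R hr hrR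
  refine ⟨F.image (glueProj G x i), ?_, ?_⟩
  · calc ((F.image (glueProj G x i)).card : ℝ) ≤ (F.card : ℝ) := by
          exact_mod_cast Finset.card_image_le
      _ ≤ _ := hFcard
  · intro y hy
    have hy' : gluedDist V G x l (iota x l hl i x0) (iota x l hl i y) ≤ R := by
      rw [gd_iota_iota]; exact hy
    have := hFcov hy'
    simp only [Set.mem_iUnion, Set.mem_setOf_eq, exists_prop] at this ⊢
    obtain ⟨z, hzF, hz⟩ := this
    exact ⟨glueProj G x i z, Finset.mem_image_of_mem _ hzF,
      le_trans (glueProj_le hl i z y) hz⟩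

lemma aux_T_finite (G : ∀ i, SimpleGraph (V i)) (hl0 : 0 ≤ l 0)
    (hmono : StrictMono l)
    (hsep : ∀ i : ℕ, 2 * (graphDiam (G i) : ℝ) < l (i + 1) - l i)
    (t0 R c : ℝ) (hc : 0 ≤ c) :
    {j : ℕ | |l j - t0| ≤ R ∧ c < min R (graphDiam (G j) : ℝ)}.Finite := by
  classical
  set T := {j : ℕ | |l j - t0| ≤ R ∧ c < min R (graphDiam (G j) : ℝ)} with hT
  set cnt : ℕ → ℕ := fun j =>
    ((Finset.range j).filter (fun i => 1 ≤ graphDiam (G i))).card with hcnt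
  have hgap0 : ∀ i, (0:ℝ) ≤ l (i + 1) - l i := fun i =>
    le_of_lt (lt_of_le_of_lt (by positivity) (hsep i))
  have hmemD : ∀ j ∈ T, 1 ≤ graphDiam (G j) := by
    intro j hj
    obtain ⟨_, h2⟩ := hj
    have h3 : (0:ℝ) < (graphDiam (G j) : ℝ) :=
      lt_of_le_of_lt hc (lt_of_lt_of_le h2 (min_le_right _ _))
    exact_mod_cast Nat.one_le_iff_ne_zero.mpr (by exact_mod_cast h3.ne')
  have hbound : ∀ j ∈ T, (cnt j : ℝ) ≤ (t0 + R - l 0) / 2 := by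
    intro j hj
    have h1 : 2 * (cnt j : ℝ) =
        ∑ i ∈ (Finset.range j).filter (fun i => 1 ≤ graphDiam (G i)), (2:ℝ) := by
      rw [Finset.sum_const, hcnt]
      push_cast; ring
    have h2 : ∑ i ∈ (Finset.range j).filter (fun i => 1 ≤ graphDiam (G i)), (2:ℝ) ≤
        ∑ i ∈ (Finset.range j).filter (fun i => 1 ≤ graphDiam (G i)), (l (i+1) - l i) := by
      apply Finset.sum_le_sum
      intro i hi
      have hDi : 1 ≤ graphDiam (G i) := (Finset.mem_filter.mp hi).2
      have hDi' : (1:ℝ) ≤ (graphDiam (G i) : ℝ) := by exact_mod_cast hDi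
      have := hsep i
      linarith
    have h3 : ∑ i ∈ (Finset.range j).filter (fun i => 1 ≤ graphDiam (G i)), (l (i+1) - l i) ≤
        ∑ i ∈ Finset.range j, (l (i+1) - l i) :=
      Finset.sum_le_sum_of_subset_of_nonneg (Finset.filter_subset _ _)
        (fun i _ _ => hgap0 i)
    have h4 : ∑ i ∈ Finset.range j, (l (i+1) - l i) = l j - l 0 :=
      Finset.sum_range_sub l j
    have h5 : l j ≤ t0 + R := by
      have := (abs_le.mp hj.1).2; linarith
    linarith
  have hstrict : ∀ j ∈ T, ∀ k ∈ T, j < k → cnt j < cnt k := by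
    intro j hj k hk hjk
    apply Finset.card_lt_card
    constructor
    · apply Finset.filter_subset_filter
      exact Finset.range_subset_range.mpr hjk.le
    · intro hsub
      have hjmem : j ∈ (Finset.range k).filter (fun i => 1 ≤ graphDiam (G i)) :=
        Finset.mem_filter.mpr ⟨Finset.mem_range.mpr hjk, hmemD j hj⟩
      have := hsub hjmem
      simp [Finset.mem_filter, Finset.mem_range] at this
  have hinj : Set.InjOn cnt T := by
    intro a ha b hb hab
    rcases lt_trichotomy a b with h | h | h
    · exact absurd hab (hstrict a ha b hb h).ne
    · exact h
    · exact absurd hab.symm (hstrict b hb a ha h).ne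
  apply Set.Finite.of_finite_image _ hinj
  apply Set.Finite.subset (Set.finite_Iic ⌊(t0 + R - l 0) / 2⌋₊)
  rintro n ⟨j, hj, rfl⟩
  exact Set.mem_Iic.mpr (Nat.le_floor (hbound j hj))

lemma aux_sum_m_le (G : ∀ i, SimpleGraph (V i)) (hmono : StrictMono l)
    (hsep : ∀ i : ℕ, 2 * (graphDiam (G i) : ℝ) < l (i + 1) - l i)
    {t0 R : ℝ} (hR : 0 < R) (J : Finset ℕ) (hJ : ∀ j ∈ J, |l j - t0| ≤ R) :
    ∑ j ∈ J, min R (graphDiam (G j) : ℝ) ≤ 2 * R := by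
  classical
  rcases J.eq_empty_or_nonempty with rfl | hne
  · simp; linarith
  set m : ℕ → ℝ := fun j => min R (graphDiam (G j) : ℝ) with hm
  have hmR : ∀ j, m j ≤ R := fun j => min_le_left _ _
  have hmD : ∀ j, m j ≤ (graphDiam (G j) : ℝ) := fun j => min_le_right _ _
  have hgap0 : ∀ i, (0:ℝ) ≤ l (i + 1) - l i := fun i =>
    le_of_lt (lt_of_le_of_lt (by positivity) (hsep i))
  set jM := J.max' hne with hjM
  set jm := J.min' hne with hjm
  rw [← Finset.sum_erase_add J _ (J.max'_mem hne)]
  have key : ∑ j ∈ J.erase jM, (2 * m j) ≤ 2 * R := by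
    have hsub : J.erase jM ⊆ Finset.Ico jm jM := by
      intro j hj
      obtain ⟨hne', hjJ⟩ := Finset.mem_erase.mp hj
      exact Finset.mem_Ico.mpr ⟨J.min'_le j hjJ, lt_of_le_of_ne (J.le_max' j hjJ) hne'⟩
    calc ∑ j ∈ J.erase jM, (2 * m j) ≤ ∑ j ∈ J.erase jM, (l (j+1) - l j) := by
          apply Finset.sum_le_sum
          intro j hj
          have := hsep j
          have := hmD j
          linarith
      _ ≤ ∑ j ∈ Finset.Ico jm jM, (l (j+1) - l j) :=
          Finset.sum_le_sum_of_subset_of_nonneg hsub (fun i _ _ => hgap0 i)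
      _ = l jM - l jm := aux_telescope_Ico l (J.min'_le jM (J.max'_mem hne))
      _ ≤ 2 * R := by
          have h1 := (abs_le.mp (hJ jM (J.max'_mem hne))).2
          have h2 := (abs_le.mp (hJ jm (J.min'_mem hne))).1
          linarith
  have hsum2 : ∑ j ∈ J.erase jM, (2 * m j) = 2 * ∑ j ∈ J.erase jM, m j := by
    rw [Finset.mul_sum]
  have := hmR jM
  rw [hsum2] at key
  linarith

lemma coverRay (hconn : ∀ i, (G i).Connected) (hl0 : 0 ≤ l 0) (hmono : StrictMono l)
    (hsep : ∀ i : ℕ, 2 * (graphDiam (G i) : ℝ) < l (i + 1) - l i)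
    {β C : ℝ} (hβ : 1 ≤ β) (hC : 0 < C)
    (hA : AssouadBoundWith V (fun i u v => ((G i).dist u v : ℝ)) β C)
    (t : {s : ℝ // 0 ≤ s}) (r R : ℝ) (hr : 0 < r) (hrR : r < R) :
    ∃ F : Finset (Glued V x), (F.card : ℝ) ≤ (6 + max C 1 * 4 ^ β) * (R / r) ^ β ∧
      {y | gluedDist V G x l (Sum.inl t) y ≤ R} ⊆
        ⋃ z ∈ F, {y | gluedDist V G x l z y ≤ r} := by
  classical
  obtain ⟨t0, ht0⟩ := t
  have hl : ∀ i, 0 ≤ l i := fun i => hl0.trans (hmono.monotone (Nat.zero_le i))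
  have hR : 0 < R := hr.trans hrR
  have hβ0 : (0:ℝ) ≤ β := by linarith
  set A : ℝ := max 0 (t0 - R) with hAdef
  have hA0 : (0:ℝ) ≤ A := le_max_left _ _
  set N : ℕ := ⌈4 * R / r⌉₊ with hNdef
  set rayC : Finset (Glued V x) :=
    (Finset.range (N + 1)).image
      (fun k : ℕ => (Sum.inl ⟨A + k * (r / 2),
        add_nonneg hA0 (mul_nonneg (Nat.cast_nonneg _) (by linarith))⟩ : Glued V x)) with hrayC
  set m : ℕ → ℝ := fun j => min R (graphDiam (G j) : ℝ) with hm
  have hmnn : ∀ j, 0 ≤ m j := fun j => le_min hR.le (Nat.cast_nonneg _)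
  have hTfin := aux_T_finite G hl0 hmono hsep t0 R (r / 2) (by positivity)
  set J : Finset ℕ := hTfin.toFinset with hJdef
  have hJmem : ∀ {j : ℕ}, j ∈ J ↔ (|l j - t0| ≤ R ∧ r / 2 < m j) := fun {j} =>
    hTfin.mem_toFinset
  -- per-graph covers
  have hGF : ∀ j ∈ J, ∃ Fj : Finset (Glued V x),
      (Fj.card : ℝ) ≤ max C 1 * (2 * m j / r) ^ β ∧
      ∀ b : {a : V j // a ≠ x j}, ((G j).dist b.1 (x j) : ℝ) ≤ m j →
        ∃ z ∈ Fj, gluedDist V G x l z (Sum.inr ⟨j, b⟩) ≤ r := by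
    intro j hj
    obtain ⟨h1, h2⟩ := hJmem.mp hj
    have h2m : (1:ℝ) < 2 * m j / r := by rw [lt_div_iff₀ hr]; linarith
    have hC1 : (1:ℝ) ≤ max C 1 := le_max_right _ _
    rcases le_or_gt (m j) r with hmr | hmr
    · refine ⟨{Sum.inl ⟨l j, hl j⟩}, ?_, ?_⟩
      · refine le_trans (le_of_eq (congrArg (Nat.cast : ℕ → ℝ) (Finset.card_singleton _))) ?_
        simp only [Nat.cast_one]
        have hone : (1:ℝ) ≤ (2 * m j / r) ^ β := Real.one_le_rpow h2m.le hβ0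
        nlinarith
      · intro b hb
        refine ⟨_, Finset.mem_singleton_self _, ?_⟩
        show ((G j).dist b.1 (x j) : ℝ) + |l j - l j| ≤ r
        simp only [sub_self, abs_zero, add_zero]
        linarith
    · obtain ⟨F0, hF0card, hF0cov⟩ := hA j (x j) r (m j) hr hmr
      refine ⟨F0.image (iota x l hl j), ?_, ?_⟩
      · have hle : (m j / r) ^ β ≤ (2 * m j / r) ^ β := by
          apply Real.rpow_le_rpow (by positivity) ?_ hβ0
          exact div_le_div_of_nonneg_right (by linarith [hmnn j]) hr.le
        calc ((F0.image (iota x l hl j)).card : ℝ) ≤ (F0.card : ℝ) := by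
              exact_mod_cast Finset.card_image_le
          _ ≤ C * (m j / r) ^ β := hF0card
          _ ≤ max C 1 * (2 * m j / r) ^ β := by
              apply mul_le_mul (le_max_left _ _) hle (by positivity)
              linarith
      · intro b hb
        have hb' : b.1 ∈ {y | ((G j).dist (x j) y : ℝ) ≤ m j} := by
          simp only [Set.mem_setOf_eq]
          rw [SimpleGraph.dist_comm]
          exact hb
        have := hF0cov hb'
        simp only [Set.mem_iUnion, Set.mem_setOf_eq, exists_prop] at this
        obtain ⟨z, hzF, hz⟩ := this
        refine ⟨iota x l hl j z, Finset.mem_image_of_mem _ hzF, ?_⟩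
        rw [iota_inr x l hl j b, gd_iota_iota]
        exact hz
  choose GF hGFcard hGFcov using hGF
  set graphC : Finset (Glued V x) := J.attach.biUnion (fun j => GF j.1 j.2) with hgraphC
  refine ⟨rayC ∪ graphC, ?_, ?_⟩
  · -- cardinality bound
    have hRr1 : (1:ℝ) ≤ R / r := by rw [le_div_iff₀ hr]; linarith
    have hpow : R / r ≤ (R / r) ^ β := by
      calc R / r = (R / r) ^ (1:ℝ) := (Real.rpow_one _).symm
        _ ≤ (R / r) ^ β := Real.rpow_le_rpow_of_exponent_le hRr1 hβ
    have cardray : (rayC.card : ℝ) ≤ 4 * (R / r) + 2 := by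
      have h1 : rayC.card ≤ N + 1 := by
        calc rayC.card ≤ (Finset.range (N+1)).card := Finset.card_image_le
          _ = N + 1 := Finset.card_range _
      have h2 : (N : ℝ) < 4 * R / r + 1 := Nat.ceil_lt_add_one (by positivity)
      have h3 : (rayC.card : ℝ) ≤ (N:ℝ) + 1 := by exact_mod_cast h1
      have : 4 * R / r = 4 * (R / r) := by ring
      linarith
    have cardgraph : (graphC.card : ℝ) ≤ max C 1 * 4 ^ β * (R / r) ^ β := by
      have h1 : graphC.card ≤ ∑ j ∈ J.attach, (GF j.1 j.2).card := Finset.card_biUnion_le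
      have h2 : (graphC.card : ℝ) ≤ ∑ j ∈ J.attach, ((GF j.1 j.2).card : ℝ) := by
        exact_mod_cast h1
      have h3 : ∑ j ∈ J.attach, ((GF j.1 j.2).card : ℝ) ≤
          ∑ j ∈ J.attach, max C 1 * (2 * m j.1 / r) ^ β :=
        Finset.sum_le_sum (fun j _ => hGFcard j.1 j.2)
      have h4 : ∑ j ∈ J.attach, max C 1 * (2 * m j.1 / r) ^ β =
          ∑ j ∈ J, max C 1 * (2 * m j / r) ^ β := by
        rw [← Finset.sum_attach J (fun j => max C 1 * (2 * m j / r) ^ β)]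
      have h5 : ∀ j, max C 1 * (2 * m j / r) ^ β =
          max C 1 * (2 / r) ^ β * (m j) ^ β := by
        intro j
        have : 2 * m j / r = (2 / r) * m j := by ring
        rw [this, Real.mul_rpow (by positivity) (hmnn j), mul_assoc]
      have h6 : ∑ j ∈ J, max C 1 * (2 * m j / r) ^ β =
          max C 1 * (2 / r) ^ β * ∑ j ∈ J, (m j) ^ β := by
        rw [Finset.mul_sum]
        exact Finset.sum_congr rfl (fun j _ => h5 j)
      have h7 : ∑ j ∈ J, (m j) ^ β ≤ (2 * R) ^ β := by
        calc ∑ j ∈ J, (m j) ^ β ≤ (∑ j ∈ J, m j) ^ β :=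
              aux_sum_rpow_le hβ J m (fun j _ => hmnn j)
          _ ≤ (2 * R) ^ β := by
              apply Real.rpow_le_rpow (Finset.sum_nonneg (fun j _ => hmnn j)) ?_ hβ0
              exact aux_sum_m_le G hmono hsep hR J (fun j hj => (hJmem.mp hj).1)
      have h8 : max C 1 * (2 / r) ^ β * (2 * R) ^ β = max C 1 * 4 ^ β * (R / r) ^ β := by
        rw [mul_assoc, mul_assoc, ← Real.mul_rpow (by positivity) (by positivity),
          ← Real.mul_rpow (by positivity) (by positivity)]
        congr 2
        ring
      have h9 : (0:ℝ) ≤ max C 1 * (2 / r) ^ β := by positivity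
      calc (graphC.card : ℝ) ≤ max C 1 * (2 / r) ^ β * ∑ j ∈ J, (m j) ^ β := by
            rw [← h6, ← h4]; linarith
        _ ≤ max C 1 * (2 / r) ^ β * (2 * R) ^ β := by
            apply mul_le_mul_of_nonneg_left h7 h9
        _ = max C 1 * 4 ^ β * (R / r) ^ β := h8
    calc ((rayC ∪ graphC).card : ℝ) ≤ (rayC.card : ℝ) + (graphC.card : ℝ) := by
          exact_mod_cast Finset.card_union_le _ _
      _ ≤ (4 * (R / r) + 2) + max C 1 * 4 ^ β * (R / r) ^ β := by linarith
      _ ≤ (6 + max C 1 * 4 ^ β) * (R / r) ^ β := by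
          have h1 : (1:ℝ) ≤ (R / r) ^ β := le_trans hRr1 hpow
          nlinarith
  · -- covering
    have hray : ∀ s : ℝ, 0 ≤ s → |s - t0| ≤ R →
        ∃ k ∈ Finset.range (N + 1), |s - (A + (k:ℝ) * (r / 2))| ≤ r / 2 := by
      intro s hs habs
      obtain ⟨hs1, hs2⟩ := abs_le.mp habs
      have hAs : A ≤ s := max_le hs (by linarith)
      have ht0A : t0 - R ≤ A := le_max_right _ _
      have hs2R : s - A ≤ 2 * R := by linarith
      have hr2 : (0:ℝ) < r / 2 := by linarith
      set k := ⌊(s - A) / (r / 2)⌋₊ with hk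
      have hk1 : (k : ℝ) ≤ (s - A) / (r / 2) := Nat.floor_le (div_nonneg (by linarith) (by linarith))
      have hk2 : (s - A) / (r / 2) < (k : ℝ) + 1 := Nat.lt_floor_add_one _
      refine ⟨k, ?_, ?_⟩
      · rw [Finset.mem_range]
        have hkb : (k : ℝ) ≤ 4 * R / r := by
          calc (k:ℝ) ≤ (s - A) / (r / 2) := hk1
            _ ≤ (2 * R) / (r / 2) := div_le_div_of_nonneg_right hs2R hr2.le
            _ = 4 * R / r := by field_simp; ring
        have hN4 : (4 * R / r : ℝ) ≤ (N : ℝ) := Nat.le_ceil _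
        have : (k : ℝ) ≤ (N : ℝ) := le_trans hkb hN4
        have : k ≤ N := by exact_mod_cast this
        omega
      · have hu : (k:ℝ) * (r/2) ≤ s - A := (le_div_iff₀ hr2).mp hk1
        have hv : s - A < ((k:ℝ) + 1) * (r/2) := by
          have := (div_lt_iff₀ hr2).mp hk2
          linarith
        rw [abs_le]
        constructor <;> [linarith; linarith]
    intro y hy
    simp only [Set.mem_setOf_eq] at hy
    simp only [Set.mem_iUnion, Set.mem_setOf_eq, exists_prop]
    match y with
    | Sum.inl u =>
      have hyd : |t0 - u.1| ≤ R := hy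
      obtain ⟨k, hkmem, hkd⟩ := hray u.1 u.2 (by rw [abs_sub_comm]; exact hyd)
      refine ⟨Sum.inl ⟨A + (k:ℝ) * (r / 2), add_nonneg hA0 (mul_nonneg (Nat.cast_nonneg _) (by linarith))⟩, ?_, ?_⟩
      · exact Finset.mem_union_left _ (Finset.mem_image_of_mem _ hkmem)
      · show |(A + (k:ℝ) * (r / 2)) - u.1| ≤ r
        rw [abs_sub_comm]
        linarith [hkd, abs_nonneg (u.1 - (A + (k:ℝ) * (r / 2)))]
    | Sum.inr ⟨j, b⟩ =>
      have hyd : ((G j).dist b.1 (x j) : ℝ) + |l j - t0| ≤ R := hy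
      have hd0 : (0:ℝ) ≤ ((G j).dist b.1 (x j) : ℝ) := Nat.cast_nonneg _
      have habs0 : (0:ℝ) ≤ |l j - t0| := abs_nonneg _
      rcases le_or_gt ((G j).dist b.1 (x j) : ℝ) (r / 2) with hsmall | hbig
      · obtain ⟨k, hkmem, hkd⟩ := hray (l j) (hl j) (by linarith)
        refine ⟨Sum.inl ⟨A + (k:ℝ) * (r / 2), add_nonneg hA0 (mul_nonneg (Nat.cast_nonneg _) (by linarith))⟩, ?_, ?_⟩
        · exact Finset.mem_union_left _ (Finset.mem_image_of_mem _ hkmem)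
        · show ((G j).dist b.1 (x j) : ℝ) + |l j - (A + (k:ℝ) * (r / 2))| ≤ r
          linarith
      · have hdD : ((G j).dist b.1 (x j) : ℝ) ≤ (graphDiam (G j) : ℝ) := by
          exact_mod_cast aux_dist_le_graphDiam G j b.1 (x j)
        have hjJ : j ∈ J := hJmem.mpr ⟨by linarith,
          lt_min (by linarith) (lt_of_lt_of_le hbig hdD)⟩
        have hbm : ((G j).dist b.1 (x j) : ℝ) ≤ m j :=
          le_min (by linarith) hdD
        obtain ⟨z, hzF, hz⟩ := hGFcov j hjJ b hbm
        refine ⟨z, Finset.mem_union_right _ ?_, hz⟩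
        exact Finset.mem_biUnion.mpr ⟨⟨j, hjJ⟩, Finset.mem_attach _ _, hzF⟩

lemma forward (hconn : ∀ i, (G i).Connected) (hl0 : 0 ≤ l 0) (hmono : StrictMono l)
    (hsep : ∀ i : ℕ, 2 * (graphDiam (G i) : ℝ) < l (i + 1) - l i)
    {β C : ℝ} (hβ : 1 ≤ β) (hC : 0 < C)
    (hA : AssouadBoundWith V (fun i u v => ((G i).dist u v : ℝ)) β C) :
    ∃ C' : ℝ, 0 < C' ∧ AssouadBoundWith (fun _ : Unit => Glued V x)
      (fun _ u v => gluedDist V G x l u v) β C' := by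
  classical
  have hl : ∀ i, 0 ≤ l i := fun i => hl0.trans (hmono.monotone (Nat.zero_le i))
  have hβ0 : (0:ℝ) ≤ β := by linarith
  have h2β : (0:ℝ) < (2:ℝ) ^ β := Real.rpow_pos_of_pos (by norm_num) β
  have h2β1 : (1:ℝ) ≤ (2:ℝ) ^ β := Real.one_le_rpow (by norm_num) hβ0
  have h4β : (0:ℝ) < (4:ℝ) ^ β := Real.rpow_pos_of_pos (by norm_num) β
  have hMax : (0:ℝ) < max C 1 := lt_of_lt_of_le hC (le_max_left _ _)
  set K : ℝ := 6 + max C 1 * 4 ^ β with hK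
  have hKpos : 0 < K := by positivity
  refine ⟨K * 2 ^ β + C, by positivity, ?_⟩
  intro _ p r R hr hrR
  have hR : 0 < R := hr.trans hrR
  have hRr : (0:ℝ) < (R / r) ^ β := Real.rpow_pos_of_pos (by positivity) β
  match p with
  | Sum.inl t =>
    obtain ⟨F, hcard, hcov⟩ := coverRay hconn hl0 hmono hsep hβ hC hA t r R hr hrR
    refine ⟨F, le_trans hcard ?_, hcov⟩
    nlinarith
  | Sum.inr ⟨i, a⟩ =>
    rcases le_or_gt ((G i).dist a.1 (x i) : ℝ) R with hle | hgt
    · obtain ⟨F, hcard, hcov⟩ := coverRay hconn hl0 hmono hsep hβ hC hA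
        ⟨l i, hl i⟩ r (2 * R) hr (by linarith)
      refine ⟨F, ?_, ?_⟩
      · calc (F.card : ℝ) ≤ K * (2 * R / r) ^ β := hcard
          _ = K * 2 ^ β * (R / r) ^ β := by
              rw [show (2 * R / r : ℝ) = 2 * (R / r) by ring,
                Real.mul_rpow (by norm_num) (by positivity), ← mul_assoc]
          _ ≤ (K * 2 ^ β + C) * (R / r) ^ β := by nlinarith
      · intro y hy
        apply hcov
        simp only [Set.mem_setOf_eq] at hy ⊢
        have htr := gd_ray_triangle G x l hconn ⟨l i, hl i⟩ (Sum.inr ⟨i, a⟩) y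
        have hdp : gluedDist V G x l (Sum.inl ⟨l i, hl i⟩) (Sum.inr ⟨i, a⟩) ≤ R := by
          show ((G i).dist a.1 (x i) : ℝ) + |l i - l i| ≤ R
          simp only [sub_self, abs_zero, add_zero]
          exact hle
        linarith
    · obtain ⟨F0, hcard, hcov⟩ := hA i a.1 r R hr hrR
      refine ⟨F0.image (iota x l hl i), ?_, ?_⟩
      · calc ((F0.image (iota x l hl i)).card : ℝ) ≤ (F0.card : ℝ) := by
              exact_mod_cast Finset.card_image_le
          _ ≤ C * (R / r) ^ β := hcard
          _ ≤ (K * 2 ^ β + C) * (R / r) ^ β := by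
              nlinarith [mul_pos (mul_pos hKpos h2β) hRr]
      · intro y hy
        simp only [Set.mem_setOf_eq] at hy
        simp only [Set.mem_iUnion, Set.mem_setOf_eq, exists_prop]
        match y with
        | Sum.inl u =>
          exfalso
          have h1 : ((G i).dist a.1 (x i) : ℝ) + |l i - u.1| ≤ R := hy
          have h2 := abs_nonneg (l i - u.1)
          linarith
        | Sum.inr ⟨j, b⟩ =>
          by_cases hij : i = j
          · subst hij
            rw [gd_same] at hy
            have hbmem : b.1 ∈ {y | ((G i).dist a.1 y : ℝ) ≤ R} := hy
            have := hcov hbmem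
            simp only [Set.mem_iUnion, Set.mem_setOf_eq, exists_prop] at this
            obtain ⟨z, hzF, hz⟩ := this
            refine ⟨iota x l hl i z, Finset.mem_image_of_mem _ hzF, ?_⟩
            rw [iota_inr x l hl i b, gd_iota_iota]
            exact hz
          · exfalso
            rw [gd_ne G x l hij] at hy
            have h1 : (0:ℝ) ≤ ((G j).dist (x j) b.1 : ℝ) := Nat.cast_nonneg _
            have h2 := abs_nonneg (l i - l j)
            linarith

end MainLemmas

/-- Gluing a sequence of finite connected graphs of Assouad dimension `β` along an
infinite ray, at base points separated by more than twice the diameters of the glued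
graphs, produces a single metric space whose Assouad dimension is again `β`. -/
theorem glued_space_assouadDim (V : ℕ → Type*) [∀ i, Fintype (V i)]
    [∀ i, Nonempty (V i)] (G : ∀ i, SimpleGraph (V i)) (hconn : ∀ i, (G i).Connected)
    (β : ℝ) (hβ : 1 ≤ β)
    (hdim : assouadDim V (fun i u v => ((G i).dist u v : ℝ)) = ENNReal.ofReal β)
    (x : ∀ i, V i) (l : ℕ → ℝ) (hl0 : 0 ≤ l 0) (hmono : StrictMono l)
    (hsep : ∀ i : ℕ, 2 * (graphDiam (G i) : ℝ) < l (i + 1) - l i) :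
    assouadDim (fun _ : Unit => Glued V x) (fun _ u v => gluedDist V G x l u v)
      = ENNReal.ofReal β := by
  have hl : ∀ i, 0 ≤ l i := fun i => hl0.trans (hmono.monotone (Nat.zero_le i))
  apply le_antisymm
  · rw [← hdim]
    unfold assouadDim
    apply le_sInf
    rintro b ⟨β', rfl, hb0, C, hC, hAb⟩
    have hββ' : β ≤ β' := by
      have h1 : ENNReal.ofReal β ≤ ENNReal.ofReal β' := by
        rw [← hdim]
        unfold assouadDim
        exact sInf_le ⟨β', rfl, hb0, C, hC, hAb⟩
      exact (ENNReal.ofReal_le_ofReal_iff hb0).mp h1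
    have hβ'1 : 1 ≤ β' := le_trans hβ hββ'
    obtain ⟨C', hC', hfor⟩ := forward hconn hl0 hmono hsep hβ'1 hC hAb
    exact sInf_le ⟨β', rfl, hb0, C', hC', hfor⟩
  · unfold assouadDim at hdim ⊢
    apply le_sInf
    rintro b ⟨β'', rfl, hb0, C, hC, hAb⟩
    rw [← hdim]
    exact sInf_le ⟨β'', rfl, hb0, C, hC, backward hl hAb⟩
end
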